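/- arXiv:2111.05771 — 3 statements merged into one kernel-verified Lean document; each statement's English description precedes it below -/
import Mathlib

section
/- For a simple, properly ordered Bratteli-Vershik system (X,T), the following statements are equivalent: (1) there are infinitely many k >= 1 for which there exists a depth k pair of paths having a j cut for every j > k; (2) some telescoping of (X,T) is very well timed; (3) (X,T) is conjugate to a very well timed system. -/
set_option autoImplicit false

/-- An ordered Bratteli diagram: finite nonempty vertex sets `V n`, a single root
vertex at level `0`, finite edge sets `E n` (edges from level `n` to level `n+1`,
multiple edges allowed), every vertex has an outgoing edge, every non-root vertex
an incoming edge, and the edges into each vertex carry a linear order, encoded by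
the relation `elt` which relates only edges with the same target. -/
structure BDiagram where
  V : ℕ → Type
  E : ℕ → Type
  fintV : ∀ n, Fintype (V n)
  fintE : ∀ n, Fintype (E n)
  nonV : ∀ n, Nonempty (V n)
  rootSubsingleton : Subsingleton (V 0)
  src : ∀ {n}, E n → V n
  tgt : ∀ {n}, E n → V (n + 1)
  hasOut : ∀ (n : ℕ) (v : V n), ∃ e : E n, src e = v
  hasIn : ∀ (n : ℕ) (v : V (n + 1)), ∃ e : E n, tgt e = v
  elt : ∀ {n}, E n → E n → Prop
  elt_tgt : ∀ (n : ℕ) (e f : E n), elt e f → tgt e = tgt f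
  elt_irrefl : ∀ (n : ℕ) (e : E n), ¬ elt e e
  elt_trans : ∀ (n : ℕ) (e f g : E n), elt e f → elt f g → elt e g
  elt_total : ∀ (n : ℕ) (e f : E n), tgt e = tgt f → e ≠ f → elt e f ∨ elt f e

namespace BDiagram

variable (B : BDiagram)

def castV {m n : ℕ} (h : m = n) (v : B.V m) : B.V n := h ▸ v

/-- An edge is minimal if no edge (into the same target) is below it. -/
def IsMinEdge {n : ℕ} (e : B.E n) : Prop := ∀ e' : B.E n, ¬ B.elt e' e

/-- An edge is maximal if no edge (into the same target) is above it. -/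
def IsMaxEdge {n : ℕ} (e : B.E n) : Prop := ∀ e' : B.E n, ¬ B.elt e e'

/-- The space of infinite paths from the root. -/
def PathSpace : Type := { x : ∀ n, B.E n // ∀ n, B.tgt (x n) = B.src (x (n + 1)) }

def IsMinPath (x : B.PathSpace) : Prop := ∀ n, B.IsMinEdge (x.1 n)

def IsMaxPath (x : B.PathSpace) : Prop := ∀ n, B.IsMaxEdge (x.1 n)

/-- Properly ordered: unique minimal and unique maximal path. -/
def ProperlyOrdered : Prop :=
  (∃! x : B.PathSpace, B.IsMinPath x) ∧ (∃! x : B.PathSpace, B.IsMaxPath x)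

/-- The partial order on cofinal paths: `x < y` iff they eventually agree and at the
last disagreement the edge of `x` is below the edge of `y`. -/
def pathLT (x y : B.PathSpace) : Prop :=
  ∃ N : ℕ, B.elt (x.1 N) (y.1 N) ∧ ∀ n : ℕ, N < n → x.1 n = y.1 n

/-- `T` is the Vershik map: each non-maximal path goes to its successor, and each
maximal path goes to a minimal path. -/
def IsVershik (T : B.PathSpace ≃ B.PathSpace) : Prop :=
  (∀ x : B.PathSpace, ¬ B.IsMaxPath x →
    B.pathLT x (T x) ∧ ∀ z : B.PathSpace, B.pathLT x z → ¬ B.pathLT z (T x)) ∧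
  (∀ x : B.PathSpace, B.IsMaxPath x → B.IsMinPath (T x))

/-- `f` is a chain of consecutive edges on levels `[a, b)`. -/
def SegOn (f : ∀ i, B.E i) (a b : ℕ) : Prop :=
  ∀ i : ℕ, a ≤ i → i + 1 < b → B.tgt (f i) = B.src (f (i + 1))

/-- Simplicity: some telescoping has complete connections between adjacent levels. -/
def Simple : Prop :=
  ∃ ns : ℕ → ℕ, StrictMono ns ∧ ns 0 = 0 ∧
    ∀ (l c : ℕ), ns (l + 1) = c + 1 →
      ∀ (v : B.V (ns l)) (w : B.V (c + 1)),
        ∃ f : ∀ i, B.E i, B.SegOn f (ns l) (c + 1) ∧ B.src (f (ns l)) = v ∧ B.tgt (f c) = w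

/-- The natural (Cantor) topology on the path space, induced from the product of
the discrete topologies on the edge sets. -/
def pathTop : TopologicalSpace B.PathSpace :=
  TopologicalSpace.induced Subtype.val (@Pi.topologicalSpace ℕ B.E (fun _ => ⊥))

/-- Integer iterates of a bijection of the path space. -/
def iterZ (T : B.PathSpace ≃ B.PathSpace) (m : ℤ) : B.PathSpace ≃ B.PathSpace :=
  (T : Equiv.Perm B.PathSpace) ^ m

/-- Two paths have the same `k`-coding: for every time `m` the initial segments of
`T^m x` and `T^m y` from the root to level `k` coincide. -/
def SameCoding (T : B.PathSpace ≃ B.PathSpace) (k : ℕ) (x y : B.PathSpace) : Prop :=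
  ∀ (m : ℤ) (i : ℕ), i < k → ((B.iterZ T m) x).1 i = ((B.iterZ T m) y).1 i

/-- A depth `k` pair: distinct paths with the same `k`-coding but not the same
`(k+1)`-coding. -/
def DepthPair (T : B.PathSpace ≃ B.PathSpace) (k : ℕ) (x y : B.PathSpace) : Prop :=
  x ≠ y ∧ B.SameCoding T k x y ∧ ¬ B.SameCoding T (k + 1) x y

/-- The pair `x, y` has a `j` cut: for some time `m`, both `T^m x` and `T^m y` are
minimal from the root into level `j`. -/
def HasCut (T : B.PathSpace ≃ B.PathSpace) (j : ℕ) (x y : B.PathSpace) : Prop :=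
  ∃ m : ℤ, (∀ i : ℕ, i < j → B.IsMinEdge (((B.iterZ T m) x).1 i)) ∧
    (∀ i : ℕ, i < j → B.IsMinEdge (((B.iterZ T m) y).1 i))

/-- Nonexpansive: for every `k ≥ 1` there are two distinct paths with the same
`k`-coding. -/
def Nonexpansive (T : B.PathSpace ≃ B.PathSpace) : Prop :=
  ∀ k : ℕ, 1 ≤ k → ∃ x y : B.PathSpace, x ≠ y ∧ B.SameCoding T k x y

/-- Well timed: for every `k ≥ 1` and every `j > k` there is a depth `k` pair with
a `j` cut. -/
def WellTimed (T : B.PathSpace ≃ B.PathSpace) : Prop :=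
  ∀ k : ℕ, 1 ≤ k → ∀ j : ℕ, k < j →
    ∃ x y : B.PathSpace, B.DepthPair T k x y ∧ B.HasCut T j x y

/-- Very well timed: for every `k ≥ 1` there is a depth `k` pair having a `j` cut
for every `j > k`. -/
def VeryWellTimed (T : B.PathSpace ≃ B.PathSpace) : Prop :=
  ∀ k : ℕ, 1 ≤ k →
    ∃ x y : B.PathSpace, B.DepthPair T k x y ∧ ∀ j : ℕ, k < j → B.HasCut T j x y

/-- Weakly well timed: for infinitely many `k ≥ 1`, for every `j > k` there is a
depth `k` pair with a `j` cut. -/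
def WeaklyWellTimed (T : B.PathSpace ≃ B.PathSpace) : Prop :=
  ∀ K : ℕ, ∃ k : ℕ, K ≤ k ∧ 1 ≤ k ∧ ∀ j : ℕ, k < j →
    ∃ x y : B.PathSpace, B.DepthPair T k x y ∧ B.HasCut T j x y

/-- Untimed: for every `k ≥ 1` there is a `j > k` such that no depth `k` pair has a
`j` cut. -/
def Untimed (T : B.PathSpace ≃ B.PathSpace) : Prop :=
  ∀ k : ℕ, 1 ≤ k → ∃ j : ℕ, k < j ∧
    ∀ x y : B.PathSpace, B.DepthPair T k x y → ¬ B.HasCut T j x y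

/-- Very untimed: for every `k ≥ 1`, no depth `k` pair has a `(k+1)` cut. -/
def VeryUntimed (T : B.PathSpace ≃ B.PathSpace) : Prop :=
  ∀ k : ℕ, 1 ≤ k →
    ∀ x y : B.PathSpace, B.DepthPair T k x y → ¬ B.HasCut T (k + 1) x y

/-- Finite paths from the root to level `n`. -/
def FinPath (n : ℕ) : Type :=
  { f : (i : Fin n) → B.E i.val //
    ∀ (i : ℕ) (h : i + 1 < n), B.tgt (f ⟨i, by omega⟩) = B.src (f ⟨i + 1, h⟩) }

/-- The lexicographic (from the end) order on finite paths to level `n` induced by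
the orders on the edges. -/
def finLT {n : ℕ} (p q : B.FinPath n) : Prop :=
  ∃ (N : ℕ) (h : N < n), B.elt (p.1 ⟨N, h⟩) (q.1 ⟨N, h⟩) ∧
    ∀ (i : ℕ) (hi : i < n), N < i → p.1 ⟨i, hi⟩ = q.1 ⟨i, hi⟩

/-- The finite path `p` to level `n` ends at the vertex `v`. -/
def EndsAt {n : ℕ} (p : B.FinPath n) (v : B.V n) : Prop :=
  ∀ (m : ℕ) (h : n = m + 1), B.tgt (p.1 ⟨m, by omega⟩) = B.castV h v

/-- The initial segment of an infinite path, from the root to level `n`. -/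
def pathInit (x : B.PathSpace) (n : ℕ) : B.FinPath n :=
  ⟨fun i => x.1 i.val, fun i _ => x.2 i⟩

/-- The vertex of an infinite path at level `n`. -/
def pathVert (x : B.PathSpace) (n : ℕ) : B.V n := B.src (x.1 n)

theorem pathInit_endsAt (x : B.PathSpace) (n : ℕ) :
    B.EndsAt (B.pathInit x n) (B.pathVert x n) := by
  intro m h
  subst h
  exact x.2 m

/-- Truncation of a finite path to a lower level. -/
def truncTo {n : ℕ} (k : ℕ) (hk : k ≤ n) (p : B.FinPath n) : B.FinPath k :=
  ⟨fun i => p.1 ⟨i.val, by omega⟩, fun i h => p.2 i (by omega)⟩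

/-- Paths `x, x'` are `k`-equivalent at level `n`: there is an order isomorphism
between the sets of finite paths from the root into their level-`n` vertices which
preserves truncations to level `k` (equality of `k`-basic blocks) and which matches
the initial segment of `x` with the initial segment of `x'` (the "dot" is in the
same place). -/
def KEquivAt (k n : ℕ) (x x' : B.PathSpace) : Prop :=
  ∃ φ : { p : B.FinPath n // B.EndsAt p (B.pathVert x n) } ≃
      { p : B.FinPath n // B.EndsAt p (B.pathVert x' n) },
    (∀ p q, B.finLT p.1 q.1 ↔ B.finLT (φ p).1 (φ q).1) ∧
    (∀ p (i : ℕ) (hik : i < k) (hin : i < n), ((φ p).1).1 ⟨i, hin⟩ = (p.1).1 ⟨i, hin⟩) ∧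
    φ ⟨B.pathInit x n, B.pathInit_endsAt x n⟩ = ⟨B.pathInit x' n, B.pathInit_endsAt x' n⟩

/-- Paths are `k`-equivalent: they agree from the root to level `k` and are
`k`-equivalent at every level `n > k`. -/
def KEquivPaths (k : ℕ) (x x' : B.PathSpace) : Prop :=
  (∀ i : ℕ, i < k → x.1 i = x'.1 i) ∧ ∀ n : ℕ, k < n → B.KEquivAt k n x x'

/-- Standard nonexpansive: for every `k ≥ 1` there is a pair of distinct
`k`-equivalent paths. -/
def SNE : Prop := ∀ k : ℕ, 1 ≤ k → ∃ x x' : B.PathSpace, x ≠ x' ∧ B.KEquivPaths k x x'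

/-!  ### Telescoping  -/

theorem castV_eq_of_heq {m n : ℕ} (h : m = n) {v : B.V m} {w : B.V n} (hw : HEq v w) :
    B.castV h v = w := by
  subst h
  exact eq_of_heq hw

theorem castV_heq {m n : ℕ} (h : m = n) (v : B.V m) : HEq (B.castV h v) v := by
  subst h
  rfl

theorem castV_inj {m n : ℕ} (h : m = n) {v w : B.V m}
    (hvw : B.castV h v = B.castV h w) : v = w := by
  subst h
  exact hvw

def castE {m n : ℕ} (h : m = n) (e : B.E m) : B.E n := h ▸ e

noncomputable def chainFrom (a : ℕ) (v : B.V a) : (i : ℕ) → B.E (a + i)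
  | 0 => (B.hasOut a v).choose
  | i + 1 => (B.hasOut (a + i + 1) (B.tgt (chainFrom a v i))).choose

theorem chainFrom_src_zero (a : ℕ) (v : B.V a) : B.src (B.chainFrom a v 0) = v :=
  (B.hasOut a v).choose_spec

theorem chainFrom_src_succ (a : ℕ) (v : B.V a) (i : ℕ) :
    B.src (B.chainFrom a v (i + 1)) = B.tgt (B.chainFrom a v i) :=
  (B.hasOut (a + i + 1) (B.tgt (B.chainFrom a v i))).choose_spec

noncomputable def chainTo (a : ℕ) : (j : ℕ) → (w : B.V (a + j + 1)) → (i : ℕ) → i ≤ j → B.E (a + i)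
  | 0, w, i, _ => B.castE (by omega : a + 0 = a + i) (B.hasIn a w).choose
  | j + 1, w, i, _ =>
      if h : i ≤ j then chainTo a j (B.src (B.hasIn (a + j + 1) w).choose) i h
      else B.castE (by omega : a + (j + 1) = a + i) (B.hasIn (a + j + 1) w).choose

theorem chainTo_tgt_last (a : ℕ) : ∀ (j : ℕ) (w : B.V (a + j + 1)),
    B.tgt (B.chainTo a j w j le_rfl) = w := by
  intro j w
  cases j with
  | zero =>
      simp only [chainTo]
      exact (B.hasIn a w).choose_spec
  | succ j =>
      simp only [chainTo]
      rw [dif_neg (by omega : ¬ j + 1 ≤ j)]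
      exact (B.hasIn (a + j + 1) w).choose_spec

theorem chainTo_chain (a : ℕ) : ∀ (j : ℕ) (w : B.V (a + j + 1)) (i : ℕ) (h : i + 1 ≤ j)
    (h' : i ≤ j), B.tgt (B.chainTo a j w i h') = B.src (B.chainTo a j w (i + 1) h) := by
  intro j
  induction j with
  | zero => intro w i h h'; omega
  | succ j ih =>
      intro w i h h'
      by_cases hij : i + 1 ≤ j
      · simp only [chainTo]
        rw [dif_pos (by omega : i ≤ j), dif_pos hij]
        exact ih _ i hij (by omega)
      · have hi : i = j := by omega
        subst hi
        simp only [chainTo]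
        rw [dif_pos (le_refl i), dif_neg (by omega : ¬ i + 1 ≤ i)]
        exact B.chainTo_tgt_last a i _


def TelE (a b : ℕ) : Type :=
  { f : (i : Fin (b - a)) → B.E (a + i.val) //
    ∀ (i : ℕ) (h : i + 1 < b - a), B.tgt (f ⟨i, by omega⟩) = B.src (f ⟨i + 1, h⟩) }

def telSrc {a b : ℕ} (hab : a < b) (f : B.TelE a b) : B.V a :=
  B.src (f.1 ⟨0, by omega⟩)

def telTgt {a b : ℕ} (hab : a < b) (f : B.TelE a b) : B.V b :=
  B.castV (by omega : a + (b - a - 1) + 1 = b) (B.tgt (f.1 ⟨b - a - 1, by omega⟩))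

def telLT {a b : ℕ} (f g : B.TelE a b) : Prop :=
  ∃ (N : ℕ) (h : N < b - a), B.elt (f.1 ⟨N, h⟩) (g.1 ⟨N, h⟩) ∧
    ∀ (i : ℕ) (hi : i < b - a), N < i → f.1 ⟨i, hi⟩ = g.1 ⟨i, hi⟩

noncomputable def Telescope (ns : ℕ → ℕ) (hmono : StrictMono ns) (h0 : ns 0 = 0) : BDiagram where
  V l := B.V (ns l)
  E l := B.TelE (ns l) (ns (l + 1))
  fintV l := B.fintV (ns l)
  fintE l := by
    classical
    letI : ∀ i : Fin (ns (l + 1) - ns l), Fintype (B.E (ns l + i.val)) := fun i => B.fintE _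
    exact Subtype.fintype _
  nonV l := B.nonV (ns l)
  rootSubsingleton := by show Subsingleton (B.V (ns 0)); rw [h0]; exact B.rootSubsingleton
  src {l} f := B.telSrc (hmono (Nat.lt_succ_self l)) f
  tgt {l} f := B.telTgt (hmono (Nat.lt_succ_self l)) f
  hasOut := by
    intro l v
    refine ⟨⟨fun i => B.chainFrom (ns l) v i.val,
      fun i h => (B.chainFrom_src_succ (ns l) v i).symm⟩, ?_⟩
    exact B.chainFrom_src_zero (ns l) v
  hasIn := by
    intro l w
    have hab : ns l < ns (l + 1) := hmono (Nat.lt_succ_self l)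
    have hj : ns l + (ns (l + 1) - ns l - 1) + 1 = ns (l + 1) := by omega
    refine ⟨⟨fun i => B.chainTo (ns l) (ns (l + 1) - ns l - 1) (B.castV hj.symm w) i.val
        (by omega), fun i h => B.chainTo_chain _ _ _ i (by omega) (by omega)⟩, ?_⟩
    show B.castV (by omega) (B.tgt (B.chainTo (ns l) (ns (l + 1) - ns l - 1)
      (B.castV hj.symm w) (ns (l + 1) - ns l - 1) (by omega))) = w
    rw [B.chainTo_tgt_last]
    exact B.castV_eq_of_heq _ (B.castV_heq _ w)
  elt {l} f g := B.telLT f g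
  elt_tgt := by
    rintro l f g ⟨N, hN, hlt, hgt⟩
    show B.telTgt _ f = B.telTgt _ g
    unfold telTgt
    refine congrArg (B.castV _) ?_
    rcases eq_or_lt_of_le (show N ≤ ns (l + 1) - ns l - 1 by omega) with h | h
    · subst h
      exact B.elt_tgt _ _ _ hlt
    · exact congrArg B.tgt (hgt _ (by omega) h)
  elt_irrefl := by
    rintro l f ⟨N, h, hlt, -⟩
    exact B.elt_irrefl _ _ hlt
  elt_trans := by
    rintro l f g h ⟨N₁, hN₁, hlt₁, hgt₁⟩ ⟨N₂, hN₂, hlt₂, hgt₂⟩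
    rcases lt_trichotomy N₁ N₂ with hc | hc | hc
    · exact ⟨N₂, hN₂, by rw [hgt₁ N₂ hN₂ hc]; exact hlt₂,
        fun i hi hN => (hgt₁ i hi (by omega)).trans (hgt₂ i hi hN)⟩
    · subst hc
      exact ⟨N₁, hN₁, B.elt_trans _ _ _ _ hlt₁ hlt₂,
        fun i hi hN => (hgt₁ i hi hN).trans (hgt₂ i hi hN)⟩
    · refine ⟨N₁, hN₁, ?_, fun i hi hN => (hgt₁ i hi hN).trans (hgt₂ i hi (by omega))⟩
      rw [← hgt₂ N₁ hN₁ hc]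
      exact hlt₁
  elt_total := by
    intro l f g htgt hne
    classical
    have hab : ns l < ns (l + 1) := hmono (Nat.lt_succ_self l)
    set b := ns (l + 1) - ns l with hb
    have hex : ∃ N, ∃ h : N < b, f.1 ⟨N, h⟩ ≠ g.1 ⟨N, h⟩ := by
      by_contra hco
      push_neg at hco
      exact hne (Subtype.ext (funext fun i => hco i.val i.isLt))
    set P : ℕ → Prop := fun N => ∃ h : N < b, f.1 ⟨N, h⟩ ≠ g.1 ⟨N, h⟩ with hP
    obtain ⟨N₀, hN₀⟩ := hex
    set N := Nat.findGreatest P b with hNdef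
    have hPN : P N := Nat.findGreatest_spec (le_of_lt hN₀.choose) hN₀
    have hafter : ∀ i (hi : i < b), N < i → f.1 ⟨i, hi⟩ = g.1 ⟨i, hi⟩ := by
      intro i hi hNi
      by_contra hcon
      exact Nat.findGreatest_is_greatest hNi (le_of_lt hi) ⟨hi, hcon⟩
    clear_value N
    obtain ⟨hNb, hNne⟩ := hPN
    have htgtN : B.tgt (f.1 ⟨N, hNb⟩) = B.tgt (g.1 ⟨N, hNb⟩) := by
      rcases eq_or_lt_of_le (show N ≤ b - 1 by omega) with h | h
      · -- N is the last index; use equality of targets of the composite edges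
        subst h
        exact B.castV_inj _ htgt
      · have h2 : f.1 ⟨N + 1, by omega⟩ = g.1 ⟨N + 1, by omega⟩ :=
          hafter (N + 1) (by omega) (by omega)
        rw [f.2 N (by omega), g.2 N (by omega), h2]
    rcases B.elt_total _ _ _ htgtN hNne with h | h
    · exact Or.inl ⟨N, hNb, h, hafter⟩
    · exact Or.inr ⟨N, hNb, h, fun i hi hN => (hafter i hi hN).symm⟩

def teleMap (ns : ℕ → ℕ) (hmono : StrictMono ns) (h0 : ns 0 = 0) (x : B.PathSpace) :
    (B.Telescope ns hmono h0).PathSpace :=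
  ⟨fun l => ⟨fun i => x.1 (ns l + i.val), fun i _ => x.2 (ns l + i)⟩, fun l => by
    have hab : ns l < ns (l + 1) := hmono (Nat.lt_succ_self l)
    have hm : ns l + (ns (l + 1) - ns l - 1) + 1 = ns (l + 1) := by omega
    show B.castV _ (B.tgt (x.1 (ns l + (ns (l + 1) - ns l - 1)))) = B.src (x.1 (ns (l + 1) + 0))
    rw [x.2 (ns l + (ns (l + 1) - ns l - 1))]
    exact B.castV_eq_of_heq _ (by rw [hm]; exact HEq.rfl)⟩


/-- Level `n+1` is uniformly ordered: there is a single nonempty block `P` of paths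
from the root to level `n` such that the `n`-basic block at every vertex at level
`n+1` is a positive power of `P`. -/
def UniformlyOrderedLevel (n : ℕ) : Prop :=
  ∃ (p : ℕ) (hp : 0 < p) (P : Fin p → B.FinPath n),
    ∀ v : B.V (n + 1), ∃ (m : ℕ), 0 < m ∧
      ∃ enum : Fin (m * p) ≃ { q : B.FinPath (n + 1) // B.EndsAt q v },
        (∀ i j : Fin (m * p), i < j ↔ B.finLT (enum i).1 (enum j).1) ∧
        (∀ i : Fin (m * p),
          B.truncTo n (Nat.le_succ n) (enum i).1 = P ⟨i.val % p, Nat.mod_lt _ hp⟩)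

/-- The ordinal label of an edge: its position in the linear order on the edges
into its target. -/
noncomputable def edgeLabel {n : ℕ} (e : B.E n) : ℕ := Nat.card { e' : B.E n // B.elt e' e }

/-- Deterministic: for every `n ≥ 1`, distinct edges with the same source at level
`n` have different ordinal labels. -/
def Deterministic : Prop :=
  ∀ n : ℕ, 1 ≤ n → ∀ e f : B.E n, B.src e = B.src f → e ≠ f →
    B.edgeLabel e ≠ B.edgeLabel f

end BDiagram

/-- A Bratteli–Vershik system: a simple, properly ordered ordered Bratteli diagram
together with its Vershik map. -/
structure BVSystem where
  B : BDiagram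
  T : B.PathSpace ≃ B.PathSpace
  proper : B.ProperlyOrdered
  simple : B.Simple
  vershik : B.IsVershik T

/-- Conjugacy of systems: an equivariant homeomorphism of the path spaces taking
minimal paths to minimal paths. -/
def Conjugate (S S' : BVSystem) : Prop :=
  ∃ φ : S.B.PathSpace ≃ S'.B.PathSpace,
    (@Continuous _ _ S.B.pathTop S'.B.pathTop φ) ∧
    (@Continuous _ _ S'.B.pathTop S.B.pathTop φ.symm) ∧
    (∀ x, φ (S.T x) = S'.T (φ x)) ∧
    (∀ x, S.B.IsMinPath x → S'.B.IsMinPath (φ x))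

/-- An odometer: a system whose diagram has exactly one vertex at every level. -/
def IsOdometer (S : BVSystem) : Prop := ∀ n, Subsingleton (S.B.V n)

/-!
Telescoping only regroups levels: `teleEquiv` identifies the two path spaces and respects the
order on cofinal paths, hence minimal and maximal paths, proper order and the Vershik map; a
depth-`ns k` pair with an `ns j` cut becomes a depth-`k` pair with a `j` cut. Telescoping along
infinitely many good depths therefore gives (1) ⇒ (2), and a telescoping is conjugate to the
original system, which gives (2) ⇒ (3).

For (3) ⇒ (1), the inverse of a conjugacy is uniformly continuous on the compact path space:
equal codings to a large depth in the very well timed system give equal codings to any prescribed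
depth in the original one, and deep enough cuts are carried to cuts at any prescribed level,
because the only path that is minimal on every initial segment is the minimal path. The pairs
obtained are distinct, so each has some finite depth, which can be made arbitrarily large.
-/

theorem exists_strictMono_zero_forall_succ {P : ℕ → Prop}
    (h : ∀ K, ∃ k, K ≤ k ∧ 1 ≤ k ∧ P k) :
    ∃ ns : ℕ → ℕ, StrictMono ns ∧ ns 0 = 0 ∧ ∀ l, P (ns (l + 1)) := by
  obtain ⟨φ, hφ, hφP⟩ := Filter.extraction_of_frequently_atTop
    (Filter.frequently_atTop.2 h)
  refine ⟨fun | 0 => 0 | l + 1 => φ l, strictMono_nat_of_lt_succ fun l => ?_, rfl,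
    fun l => (hφP l).2⟩
  cases l with
  | zero => exact (hφP 0).1
  | succ l => exact hφ (Nat.lt_add_one l)

namespace BDiagram

section Connections

variable (B : BDiagram)

theorem path_ext {x y : B.PathSpace} (h : ∀ n, x.1 n = y.1 n) : x = y :=
  Subtype.ext (funext h)

noncomputable def someEdge (n : ℕ) : B.E n :=
  (B.hasOut n (Classical.choice (B.nonV n))).choose

def Connects (a : ℕ) (v : B.V a) (c : ℕ) (w : B.V (c + 1)) : Prop :=
  a ≤ c ∧ ∃ f : ∀ i, B.E i, B.SegOn f a (c + 1) ∧ B.src (f a) = v ∧ B.tgt (f c) = w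

theorem connects_edge {a : ℕ} (e : B.E a) : B.Connects a (B.src e) a (B.tgt e) :=
  ⟨le_rfl, Function.update B.someEdge a e, fun i h₁ h₂ => by omega, by simp, by simp⟩

variable {B}

theorem Connects.trans {a c d : ℕ} {u : B.V a} {v : B.V (c + 1)} {w : B.V (d + 1)}
    (h₁ : B.Connects a u c v) (h₂ : B.Connects (c + 1) v d w) : B.Connects a u d w := by
  obtain ⟨hac, f, hf, hfu, hfv⟩ := h₁
  obtain ⟨hcd, g, hg, hgv, hgw⟩ := h₂
  refine ⟨by omega, fun i => if i ≤ c then f i else g i, fun i h₁ h₂ => ?_,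
    by simp [hac, hfu], by simp [show ¬ d ≤ c by omega, hgw]⟩
  rcases lt_trichotomy (i + 1) (c + 1) with h | h | h
  · simp only [show i ≤ c by omega, show i + 1 ≤ c by omega, if_true]
    exact hf i h₁ (by omega)
  · obtain rfl : i = c := by omega
    simp only [le_rfl, show ¬ i + 1 ≤ i by omega, if_true, if_false]
    rw [hfv, hgv]
  · simp only [show ¬ i ≤ c by omega, show ¬ i + 1 ≤ c by omega, if_false]
    exact hg i (by omega) h₂

theorem SegOn.mono {f : ∀ i, B.E i} {a b a' b' : ℕ} (hf : B.SegOn f a b) (ha : a ≤ a')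
    (hb : b' ≤ b) : B.SegOn f a' b' :=
  fun i hi hib => hf i (by omega) (by omega)

variable (B)

theorem exists_connects_to {c : ℕ} (w : B.V (c + 1)) {a : ℕ} (hac : a ≤ c) :
    ∃ v : B.V a, B.Connects a v c w := by
  induction c with
  | zero =>
    obtain rfl : a = 0 := by omega
    obtain ⟨e, rfl⟩ := B.hasIn 0 w
    exact ⟨_, B.connects_edge e⟩
  | succ c ih =>
    obtain ⟨e, rfl⟩ := B.hasIn (c + 1) w
    rcases hac.eq_or_lt with rfl | hac
    · exact ⟨_, B.connects_edge e⟩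
    · obtain ⟨v, hv⟩ := ih (B.src e) (by omega)
      exact ⟨v, hv.trans (B.connects_edge e)⟩

def FullConn (a c : ℕ) : Prop :=
  ∀ (v : B.V a) (w : B.V (c + 1)), B.Connects a v c w

variable {B}

theorem FullConn.of_succ_left {a c : ℕ} (h : B.FullConn (a + 1) c) : B.FullConn a c := by
  intro v w
  obtain ⟨e, rfl⟩ := B.hasOut a v
  exact (B.connects_edge e).trans (h _ w)

theorem FullConn.succ_right {a c : ℕ} (h : B.FullConn a c) : B.FullConn a (c + 1) := by
  intro v w
  obtain ⟨e, rfl⟩ := B.hasIn (c + 1) w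
  exact (h v _).trans (B.connects_edge e)

theorem FullConn.mono {a c a' c' : ℕ} (h : B.FullConn a c) (ha : a' ≤ a) (hc : c ≤ c') :
    B.FullConn a' c' := by
  induction c', hc using Nat.le_induction with
  | base =>
    induction a, ha using Nat.le_induction with
    | base => exact h
    | succ a _ ih => exact ih h.of_succ_left
  | succ c' _ ih => exact ih.succ_right

end Connections

section Paths

variable (B : BDiagram)

theorem pathLT_or_pathLT_of_eventually_eq {x y : B.PathSpace} (hxy : x ≠ y)
    (h : ∃ M, ∀ n, M < n → x.1 n = y.1 n) : B.pathLT x y ∨ B.pathLT y x := by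
  classical
  obtain ⟨M, hM⟩ := h
  obtain ⟨n₀, hn₀⟩ : ∃ n, x.1 n ≠ y.1 n := by
    by_contra! h
    exact hxy (B.path_ext h)
  have hn₀M : n₀ ≤ M := by
    by_contra hc
    exact hn₀ (hM n₀ (by omega))
  set N := Nat.findGreatest (fun n => x.1 n ≠ y.1 n) M
  have hN : x.1 N ≠ y.1 N := Nat.findGreatest_spec (P := fun n => x.1 n ≠ y.1 n) hn₀M hn₀
  have hafter : ∀ n, N < n → x.1 n = y.1 n := fun n hn => by
    by_cases hnM : n ≤ M
    · by_contra hc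
      exact Nat.findGreatest_is_greatest hn hnM hc
    · exact hM n (by omega)
  have htgt : B.tgt (x.1 N) = B.tgt (y.1 N) := by
    rw [x.2 N, y.2 N, hafter (N + 1) (by omega)]
  rcases B.elt_total N _ _ htgt hN with h | h
  · exact Or.inl ⟨N, h, hafter⟩
  · exact Or.inr ⟨N, h, fun n hn => (hafter n hn).symm⟩

theorem exists_path_through (x : B.PathSpace) {n : ℕ} (e : B.E n)
    (he : B.tgt e = B.tgt (x.1 n)) :
    ∃ y : B.PathSpace, y.1 n = e ∧ ∀ i, n < i → y.1 i = x.1 i := by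
  set g := Function.update x.1 n e
  have hg_above : ∀ i, n < i → g i = x.1 i := fun i hi =>
    Function.update_of_ne (by omega) _ _
  have hg_chain : ∀ i, n ≤ i → B.tgt (g i) = B.src (g (i + 1)) := fun i hi => by
    rw [hg_above (i + 1) (by omega)]
    rcases hi.eq_or_lt with rfl | hi
    · simp only [g, Function.update_self, he, x.2]
    · rw [hg_above i hi, x.2]
  cases n with
  | zero =>
    refine ⟨⟨g, fun i => hg_chain i (by omega)⟩, by simp [g], hg_above⟩
  | succ c =>
    obtain ⟨v, -, f, hf, -, hfe⟩ := B.exists_connects_to (B.src e) (Nat.zero_le c)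
    refine ⟨⟨fun i => if i ≤ c then f i else g i, fun i => ?_⟩, by simp [g],
      fun i hi => ?_⟩
    · rcases lt_trichotomy i c with h | rfl | h
      · simp only [h.le, show i + 1 ≤ c by omega, if_true]
        exact hf i (by omega) (by omega)
      · simp only [le_rfl, show ¬ i + 1 ≤ i by omega, if_true, if_false, hfe, g,
          Function.update_self]
      · simp only [show ¬ i ≤ c by omega, show ¬ i + 1 ≤ c by omega, if_false]
        exact hg_chain i h
    · simp only [show ¬ i ≤ c by omega, if_false]
      exact hg_above i hi

theorem isMinPath_iff_forall_not_pathLT {x : B.PathSpace} :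
    B.IsMinPath x ↔ ∀ y, ¬ B.pathLT y x := by
  refine ⟨fun hx y ⟨N, hN, _⟩ => hx N _ hN, fun hx n e he => ?_⟩
  obtain ⟨y, hyn, hy⟩ := B.exists_path_through x e (B.elt_tgt _ _ _ he)
  exact hx y ⟨n, hyn ▸ he, hy⟩

theorem isMaxPath_iff_forall_not_pathLT {x : B.PathSpace} :
    B.IsMaxPath x ↔ ∀ y, ¬ B.pathLT x y := by
  refine ⟨fun hx y ⟨N, hN, _⟩ => hx N _ hN, fun hx n e he => ?_⟩
  obtain ⟨y, hyn, hy⟩ := B.exists_path_through x e (B.elt_tgt _ _ _ he).symm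
  exact hx y ⟨n, hyn ▸ he, fun i hi => (hy i hi).symm⟩

theorem isVershik_unique (hp : B.ProperlyOrdered) {T₁ T₂ : B.PathSpace ≃ B.PathSpace}
    (h₁ : B.IsVershik T₁) (h₂ : B.IsVershik T₂) : T₁ = T₂ := by
  ext1 x
  by_cases hx : B.IsMaxPath x
  · exact hp.1.unique (h₁.2 x hx) (h₂.2 x hx)
  obtain ⟨hlt₁, hnext₁⟩ := h₁.1 x hx
  obtain ⟨hlt₂, hnext₂⟩ := h₂.1 x hx
  by_contra hne
  have hcof : ∃ M, ∀ n, M < n → (T₁ x).1 n = (T₂ x).1 n := by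
    obtain ⟨M₁, -, hM₁⟩ := hlt₁
    obtain ⟨M₂, -, hM₂⟩ := hlt₂
    exact ⟨max M₁ M₂, fun n hn => (hM₁ n (by omega)).symm.trans (hM₂ n (by omega))⟩
  rcases B.pathLT_or_pathLT_of_eventually_eq hne hcof with h | h
  · exact hnext₂ _ hlt₁ h
  · exact hnext₁ _ hlt₂ h

end Paths

section PathOrderEquiv

variable {B B' : BDiagram} {φ : B.PathSpace ≃ B'.PathSpace}

theorem isMinPath_apply_iff (hφ : ∀ x y, B'.pathLT (φ x) (φ y) ↔ B.pathLT x y)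
    (x : B.PathSpace) : B'.IsMinPath (φ x) ↔ B.IsMinPath x := by
  rw [isMinPath_iff_forall_not_pathLT, isMinPath_iff_forall_not_pathLT]
  exact (φ.forall_congr fun y => by rw [hφ]).symm

theorem isMaxPath_apply_iff (hφ : ∀ x y, B'.pathLT (φ x) (φ y) ↔ B.pathLT x y)
    (x : B.PathSpace) : B'.IsMaxPath (φ x) ↔ B.IsMaxPath x := by
  rw [isMaxPath_iff_forall_not_pathLT, isMaxPath_iff_forall_not_pathLT]
  exact (φ.forall_congr fun y => by rw [hφ]).symm

theorem ProperlyOrdered.of_pathLT_iff (hφ : ∀ x y, B'.pathLT (φ x) (φ y) ↔ B.pathLT x y)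
    (hp : B.ProperlyOrdered) : B'.ProperlyOrdered :=
  ⟨(φ.existsUnique_congr fun x => (isMinPath_apply_iff hφ x).symm).1 hp.1,
    (φ.existsUnique_congr fun x => (isMaxPath_apply_iff hφ x).symm).1 hp.2⟩

theorem IsVershik.permCongr (hφ : ∀ x y, B'.pathLT (φ x) (φ y) ↔ B.pathLT x y)
    {T : B.PathSpace ≃ B.PathSpace} (hT : B.IsVershik T) : B'.IsVershik (φ.permCongr T) := by
  refine ⟨fun x' hmax => ?_, fun x' hmax => ?_⟩
  all_goals
    obtain ⟨x, rfl⟩ := φ.surjective x'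
    rw [isMaxPath_apply_iff hφ] at hmax
    simp only [Equiv.permCongr_apply, Equiv.symm_apply_apply]
  · obtain ⟨hlt, hnext⟩ := hT.1 x hmax
    refine ⟨(hφ _ _).2 hlt, fun z' => ?_⟩
    obtain ⟨z, rfl⟩ := φ.surjective z'
    rw [hφ, hφ]
    exact hnext z
  · exact (isMinPath_apply_iff hφ _).2 (hT.2 x hmax)

theorem iterZ_permCongr (T : B.PathSpace ≃ B.PathSpace) (m : ℤ) (x : B.PathSpace) :
    B'.iterZ (φ.permCongr T) m (φ x) = φ (B.iterZ T m x) := by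
  unfold iterZ
  rw [← Equiv.permCongrHom_coe, ← map_zpow, Equiv.permCongrHom_coe, Equiv.permCongr_apply,
    Equiv.symm_apply_apply]

end PathOrderEquiv

section Telescoping

variable (B : BDiagram)

theorem tgt_castE_eq_src_castE {m m' n : ℕ} (h : m = n) (h' : m' = n + 1) (hm : m + 1 = m')
    {e : B.E m} {e' : B.E m'} (hc : B.castV hm (B.tgt e) = B.src e') :
    B.tgt (B.castE h e) = B.src (B.castE h' e') := by
  subst h hm
  exact hc

def segEdge {f : ∀ i, B.E i} {a b : ℕ} (hf : B.SegOn f a b) : B.TelE a b :=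
  ⟨fun i => f (a + i), fun i _ => hf (a + i) (by omega) (by omega)⟩

theorem castV_tgt_eq_src {f : ∀ i, B.E i} {i j : ℕ} (h : i + 1 = j)
    (hf : B.tgt (f i) = B.src (f (i + 1))) : B.castV h (B.tgt (f i)) = B.src (f j) := by
  subst h
  exact hf

theorem castV_tgt_eq {f : ∀ i, B.E i} {i j k : ℕ} (hij : i = j) (h : i + 1 = k) (h' : k = j + 1)
    {w : B.V k} (hw : B.tgt (f j) = B.castV h' w) : B.castV h (B.tgt (f i)) = w := by
  subst hij h
  exact hw

section Telescope

variable {ns : ℕ → ℕ} {hmono : StrictMono ns} {h0 : ns 0 = 0}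
  {T : B.PathSpace ≃ B.PathSpace}

theorem exists_block (hmono : StrictMono ns) (h0 : ns 0 = 0) (n : ℕ) :
    ∃ l i, i < ns (l + 1) - ns l ∧ ns l + i = n := by
  induction n with
  | zero => exact ⟨0, 0, by have := hmono (Nat.lt_add_one 0); omega, by simp [h0]⟩
  | succ n ih =>
    obtain ⟨l, i, hi, rfl⟩ := ih
    by_cases hi' : i + 1 < ns (l + 1) - ns l
    · exact ⟨l, i + 1, hi', rfl⟩
    · exact ⟨l + 1, 0, by have := hmono (Nat.lt_add_one (l + 1)); omega, by omega⟩

theorem block_unique (hmono : StrictMono ns) {l m i j : ℕ} (hi : i < ns (l + 1) - ns l)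
    (hj : j < ns (m + 1) - ns m) (h : ns l + i = ns m + j) : l = m := by
  by_contra hne
  rcases Nat.lt_or_gt_of_ne hne with hlt | hlt
  · have := hmono.monotone (Nat.add_one_le_of_lt hlt)
    omega
  · have := hmono.monotone (Nat.add_one_le_of_lt hlt)
    omega

theorem teleMap_apply_eq_iff {x y : B.PathSpace} {l : ℕ} :
    (B.teleMap ns hmono h0 x).1 l = (B.teleMap ns hmono h0 y).1 l ↔
      ∀ i < ns (l + 1) - ns l, x.1 (ns l + i) = y.1 (ns l + i) := by
  refine ⟨fun h i hi => congrArg (fun f => f.1 ⟨i, hi⟩) h, fun h => ?_⟩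
  exact Subtype.ext (funext fun i => h i i.2)

theorem exists_blockPos (hmono : StrictMono ns) (h0 : ns 0 = 0) (n : ℕ) :
    ∃ p : ℕ × ℕ, p.2 < ns (p.1 + 1) - ns p.1 ∧ ns p.1 + p.2 = n := by
  obtain ⟨l, i, h⟩ := exists_block hmono h0 n
  exact ⟨(l, i), h⟩

-- `p = (l, i)` locates level `n = ns l + i` as the `i`-th level of block `l`.
def blockCoord (x : (B.Telescope ns hmono h0).PathSpace) {n : ℕ} (p : ℕ × ℕ)
    (hp : p.2 < ns (p.1 + 1) - ns p.1 ∧ ns p.1 + p.2 = n) : B.E n :=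
  B.castE hp.2 ((x.1 p.1).1 ⟨p.2, hp.1⟩)

noncomputable def teleInvFun (x : (B.Telescope ns hmono h0).PathSpace) (n : ℕ) : B.E n :=
  B.blockCoord x _ (exists_blockPos hmono h0 n).choose_spec

theorem blockCoord_congr (x : (B.Telescope ns hmono h0).PathSpace) {n : ℕ} {p q : ℕ × ℕ}
    (hpq : p = q) (hp : p.2 < ns (p.1 + 1) - ns p.1 ∧ ns p.1 + p.2 = n)
    (hq : q.2 < ns (q.1 + 1) - ns q.1 ∧ ns q.1 + q.2 = n) :
    B.blockCoord x p hp = B.blockCoord x q hq := by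
  subst hpq
  rfl

theorem teleInvFun_eq (x : (B.Telescope ns hmono h0).PathSpace) {l i n : ℕ}
    (hi : i < ns (l + 1) - ns l) (h : ns l + i = n) :
    B.teleInvFun x n = B.castE h ((x.1 l).1 ⟨i, hi⟩) := by
  obtain ⟨hi', h'⟩ := (exists_blockPos hmono h0 n).choose_spec
  have hl := block_unique hmono hi' hi (h'.trans h.symm)
  rw [hl] at h'
  have hp : (exists_blockPos hmono h0 n).choose = (l, i) := Prod.ext hl (by dsimp only; omega)
  exact B.blockCoord_congr x hp _ ⟨hi, h⟩

theorem teleInvFun_chain (x : (B.Telescope ns hmono h0).PathSpace) (n : ℕ) :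
    B.tgt (B.teleInvFun x n) = B.src (B.teleInvFun x (n + 1)) := by
  obtain ⟨l, i, hi, h⟩ := exists_block hmono h0 n
  rw [B.teleInvFun_eq x hi h]
  by_cases hi' : i + 1 < ns (l + 1) - ns l
  · rw [B.teleInvFun_eq x hi' (by omega)]
    exact B.tgt_castE_eq_src_castE _ _ rfl ((x.1 l).2 i hi')
  · have hl := hmono (Nat.lt_add_one (l + 1))
    rw [B.teleInvFun_eq x (l := l + 1) (i := 0) (by omega) (by omega)]
    obtain rfl : i = ns (l + 1) - ns l - 1 := by omega
    exact B.tgt_castE_eq_src_castE _ _ (by omega) (x.2 l)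

variable (ns hmono h0) in
noncomputable def teleEquiv : B.PathSpace ≃ (B.Telescope ns hmono h0).PathSpace where
  toFun := B.teleMap ns hmono h0
  invFun x := ⟨B.teleInvFun x, B.teleInvFun_chain x⟩
  left_inv x := B.path_ext fun n => by
    obtain ⟨l, i, hi, rfl⟩ := exists_block hmono h0 n
    exact B.teleInvFun_eq _ hi rfl
  right_inv x := (B.Telescope ns hmono h0).path_ext fun l =>
    Subtype.ext <| funext fun (i : Fin _) => B.teleInvFun_eq x i.2 rfl

theorem pathLT_teleMap_iff {x y : B.PathSpace} :
    (B.Telescope ns hmono h0).pathLT (B.teleMap ns hmono h0 x) (B.teleMap ns hmono h0 y) ↔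
      B.pathLT x y := by
  constructor
  · rintro ⟨L, ⟨N, hN, hlt, hinner⟩, hafter⟩
    refine ⟨ns L + N, hlt, fun n hn => ?_⟩
    obtain ⟨l, i, hi, rfl⟩ := exists_block hmono h0 n
    rcases lt_trichotomy l L with hlL | rfl | hlL
    · have := hmono.monotone (Nat.add_one_le_of_lt hlL)
      omega
    · exact hinner i hi (by omega)
    · exact B.teleMap_apply_eq_iff.1 (hafter l hlL) i hi
  · rintro ⟨N, hlt, hafter⟩
    obtain ⟨L, i, hi, rfl⟩ := exists_block hmono h0 N
    refine ⟨L, ⟨i, hi, hlt, fun j _ hij => hafter (ns L + j) (by omega)⟩, fun l hl => ?_⟩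
    refine B.teleMap_apply_eq_iff.2 fun j _ => hafter _ ?_
    have := hmono.monotone (Nat.add_one_le_of_lt hl)
    omega

theorem telescope_properlyOrdered (hp : B.ProperlyOrdered) :
    (B.Telescope ns hmono h0).ProperlyOrdered :=
  hp.of_pathLT_iff (φ := B.teleEquiv ns hmono h0) fun _ _ => B.pathLT_teleMap_iff

theorem isMinPath_teleMap {x : B.PathSpace} (hx : B.IsMinPath x) :
    (B.Telescope ns hmono h0).IsMinPath (B.teleMap ns hmono h0 x) :=
  (isMinPath_apply_iff (φ := B.teleEquiv ns hmono h0) (fun _ _ => B.pathLT_teleMap_iff) x).2 hx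

theorem isVershik_telescope (hT : B.IsVershik T) :
    (B.Telescope ns hmono h0).IsVershik ((B.teleEquiv ns hmono h0).permCongr T) :=
  hT.permCongr fun _ _ => B.pathLT_teleMap_iff

theorem fullConn_telescope {l m : ℕ} (hlm : l ≤ m) (h : B.FullConn (ns l) (ns (m + 1) - 1)) :
    (B.Telescope ns hmono h0).FullConn l m := by
  intro v w
  have hm := hmono (Nat.lt_add_one m)
  have hpos : ns (m + 1) - 1 + 1 = ns (m + 1) := by omega
  obtain ⟨-, f, hf, hfv, hfw⟩ := h v (B.castV hpos.symm w)
  have hblock : ∀ j, l ≤ j ∧ j ≤ m → B.SegOn f (ns j) (ns (j + 1)) := fun j hj => by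
    have := hmono.monotone hj.1
    have := hmono.monotone (show j + 1 ≤ m + 1 by omega)
    exact hf.mono (by omega) (by omega)
  have hex : ∀ j, ∃ e : (B.Telescope ns hmono h0).E j,
      ∀ hj : l ≤ j ∧ j ≤ m, e = B.segEdge (hblock j hj) := fun j => by
    by_cases hj : l ≤ j ∧ j ≤ m
    · exact ⟨B.segEdge (hblock j hj), fun _ => rfl⟩
    · exact ⟨(B.Telescope ns hmono h0).someEdge j, fun h => absurd h hj⟩
  choose f' hf' using hex
  have hseg : (B.Telescope ns hmono h0).SegOn f' l (m + 1) := fun j hj hjm => by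
    rw [hf' j ⟨hj, by omega⟩, hf' (j + 1) ⟨by omega, by omega⟩]
    have := hmono (Nat.lt_add_one j)
    have := hmono (Nat.lt_add_one (j + 1))
    have := hmono.monotone (show j + 1 + 1 ≤ m + 1 by omega)
    exact B.castV_tgt_eq_src (by omega) (hf _ (le_trans (hmono.monotone hj) (by omega)) (by omega))
  have hsrc : (B.Telescope ns hmono h0).src (f' l) = v := by
    rw [hf' l ⟨le_rfl, hlm⟩]
    exact hfv
  have htgt : (B.Telescope ns hmono h0).tgt (f' m) = w := by
    rw [hf' m ⟨hlm, le_rfl⟩]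
    exact B.castV_tgt_eq (by omega) (by omega) hpos.symm hfw
  exact ⟨hlm, f', hseg, hsrc, htgt⟩

variable {B} in
theorem Simple.exists_fullConn (hs : B.Simple) (a : ℕ) : ∃ c, B.FullConn a c := by
  obtain ⟨ms, hms, -, hconn⟩ := hs
  have hlt := hms (Nat.lt_add_one a)
  have hfull : B.FullConn (ms a) (ms (a + 1) - 1) := fun v w =>
    ⟨by omega, hconn a _ (by omega) v w⟩
  exact ⟨_, hfull.mono hms.le_apply le_rfl⟩

theorem simple_of_exists_fullConn (h : ∀ a, ∃ c, B.FullConn a c) : B.Simple := by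
  choose g hg using h
  let ls : ℕ → ℕ := fun l => Nat.rec 0 (fun _ p => max (p + 1) (g p + 1)) l
  have hls : ∀ l, ls (l + 1) = max (ls l + 1) (g (ls l) + 1) := fun _ => rfl
  refine ⟨ls, strictMono_nat_of_lt_succ fun l => by rw [hls]; omega, rfl,
    fun l c hc v w => ((hg (ls l)).mono le_rfl ?_ v w).2⟩
  rw [hls] at hc
  omega

theorem telescope_simple (hs : B.Simple) : (B.Telescope ns hmono h0).Simple := by
  refine (B.Telescope ns hmono h0).simple_of_exists_fullConn fun l => ?_
  obtain ⟨c, hc⟩ := hs.exists_fullConn (ns l)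
  have := hmono.le_apply (x := l + c + 1)
  exact ⟨l + c, B.fullConn_telescope (by omega) (hc.mono le_rfl (by omega))⟩

theorem iterZ_telescope (m : ℤ) (x : B.PathSpace) :
    (B.Telescope ns hmono h0).iterZ ((B.teleEquiv ns hmono h0).permCongr T) m
      (B.teleMap ns hmono h0 x) = B.teleMap ns hmono h0 (B.iterZ T m x) :=
  iterZ_permCongr T m x

theorem sameCoding_teleMap_iff {k : ℕ} {x y : B.PathSpace} :
    (B.Telescope ns hmono h0).SameCoding ((B.teleEquiv ns hmono h0).permCongr T) k
        (B.teleMap ns hmono h0 x) (B.teleMap ns hmono h0 y) ↔ B.SameCoding T (ns k) x y := by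
  simp only [SameCoding, iterZ_telescope, teleMap_apply_eq_iff]
  refine ⟨fun h m n hn => ?_, fun h m l hl i hi => h m _ ?_⟩
  · obtain ⟨l, i, hi, rfl⟩ := exists_block hmono h0 n
    refine h m l ?_ i hi
    by_contra! hkl
    have := hmono.monotone hkl
    omega
  · have := hmono.monotone (show l + 1 ≤ k by omega)
    omega

variable {B} in
theorem DepthPair.telescope {k : ℕ} {x y : B.PathSpace} (hd : B.DepthPair T (ns k) x y) :
    (B.Telescope ns hmono h0).DepthPair ((B.teleEquiv ns hmono h0).permCongr T) k
      (B.teleMap ns hmono h0 x) (B.teleMap ns hmono h0 y) := by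
  obtain ⟨hne, hsame, hnot⟩ := hd
  refine ⟨(B.teleEquiv ns hmono h0).injective.ne hne, B.sameCoding_teleMap_iff.2 hsame,
    fun h => hnot fun m i hi => B.sameCoding_teleMap_iff.1 h m i ?_⟩
  have := hmono (Nat.lt_add_one k)
  omega

variable {B} in
theorem isMinEdge_telescope {l : ℕ} {f : (B.Telescope ns hmono h0).E l}
    (hf : ∀ i, B.IsMinEdge (f.1 i)) : (B.Telescope ns hmono h0).IsMinEdge f :=
  fun _ ⟨N, hN, hlt, _⟩ => hf ⟨N, hN⟩ _ hlt

variable {B} in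
theorem HasCut.telescope {j : ℕ} {x y : B.PathSpace} (hc : B.HasCut T (ns j) x y) :
    (B.Telescope ns hmono h0).HasCut ((B.teleEquiv ns hmono h0).permCongr T) j
      (B.teleMap ns hmono h0 x) (B.teleMap ns hmono h0 y) := by
  obtain ⟨m, hx, hy⟩ := hc
  have hlt : ∀ l < j, ∀ i : Fin (ns (l + 1) - ns l), ns l + i < ns j := fun l hl i => by
    have := hmono.monotone (show l + 1 ≤ j by omega)
    omega
  refine ⟨m, fun l hl => ?_, fun l hl => ?_⟩ <;> rw [iterZ_telescope]
  · exact isMinEdge_telescope fun i => hx _ (hlt l hl i)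
  · exact isMinEdge_telescope fun i => hy _ (hlt l hl i)

end Telescope

theorem exists_telescope_veryWellTimed {T : B.PathSpace ≃ B.PathSpace} (hT : B.IsVershik T)
    (h : ∀ K, ∃ k, K ≤ k ∧ 1 ≤ k ∧
      ∃ x y, B.DepthPair T k x y ∧ ∀ j, k < j → B.HasCut T j x y) :
    ∃ (ns : ℕ → ℕ) (hmono : StrictMono ns) (h0 : ns 0 = 0)
      (T' : (B.Telescope ns hmono h0).PathSpace ≃ (B.Telescope ns hmono h0).PathSpace),
      (B.Telescope ns hmono h0).IsVershik T' ∧ (B.Telescope ns hmono h0).VeryWellTimed T' := by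
  obtain ⟨ns, hmono, h0, hns⟩ := exists_strictMono_zero_forall_succ h
  refine ⟨ns, hmono, h0, _, B.isVershik_telescope hT, fun k hk => ?_⟩
  obtain ⟨l, rfl⟩ : ∃ l, k = l + 1 := ⟨k - 1, by omega⟩
  obtain ⟨x, y, hxy, hcut⟩ := hns l
  exact ⟨_, _, hxy.telescope, fun j hj => (hcut (ns j) (hmono hj)).telescope⟩

end Telescoping

section Topology

abbrev pathTopology (B : BDiagram) : TopologicalSpace B.PathSpace := B.pathTop

attribute [local instance] pathTopology

abbrev edgeTop (B : BDiagram) (n : ℕ) : TopologicalSpace (B.E n) := ⊥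

attribute [local instance] edgeTop

theorem discreteTopology_edge (B : BDiagram) (n : ℕ) : DiscreteTopology (B.E n) := ⟨rfl⟩

attribute [local instance] discreteTopology_edge

variable (B : BDiagram)

theorem continuous_coord (n : ℕ) : Continuous fun x : B.PathSpace => x.1 n :=
  (continuous_apply n).comp continuous_induced_dom

theorem continuous_pathSpace_iff {X : Type*} [TopologicalSpace X] {g : X → B.PathSpace} :
    Continuous g ↔ ∀ n, Continuous fun x => (g x).1 n :=
  continuous_induced_rng.trans continuous_pi_iff

theorem isClopen_setOf_forall_lt (P : ∀ i, B.E i → Prop) (r : ℕ) :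
    IsClopen {x : B.PathSpace | ∀ i < r, P i (x.1 i)} := by
  have : {x : B.PathSpace | ∀ i < r, P i (x.1 i)} =
      ⋂ i ∈ Finset.range r, (fun x : B.PathSpace => x.1 i) ⁻¹' {e | P i e} := by
    ext x
    simp
  rw [this]
  exact isClopen_biInter_finset fun i _ => (isClopen_discrete _).preimage (B.continuous_coord i)

theorem exists_cylinder_subset {U : Set B.PathSpace} (hU : IsOpen U) {x : B.PathSpace}
    (hx : x ∈ U) : ∃ r, ∀ y : B.PathSpace, (∀ i < r, y.1 i = x.1 i) → y ∈ U := by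
  obtain ⟨V, hV, rfl⟩ := isOpen_induced_iff.1 hU
  obtain ⟨I, u, hu, hIV⟩ := isOpen_pi_iff.1 hV x.1 hx
  refine ⟨I.sup id + 1, fun y hy => hIV fun i hi => ?_⟩
  have : i ≤ I.sup id := Finset.le_sup (f := id) hi
  simpa only [hy i (by omega)] using (hu i hi).2

theorem continuous_of_forall_exists_cylinder {Y : Type*} [TopologicalSpace Y]
    [DiscreteTopology Y] {g : B.PathSpace → Y}
    (h : ∀ x, ∃ r, ∀ y : B.PathSpace, (∀ i < r, y.1 i = x.1 i) → g y = g x) :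
    Continuous g := by
  refine continuous_discrete_rng.2 fun b => isOpen_iff_forall_mem_open.2 fun x hx => ?_
  obtain ⟨r, hr⟩ := h x
  exact ⟨_, fun y hy => (hr y hy).trans hx,
    (B.isClopen_setOf_forall_lt (fun i e => e = x.1 i) r).isOpen, fun _ _ => rfl⟩

theorem compactSpace_pathSpace : CompactSpace B.PathSpace := by
  let _ : ∀ n, TopologicalSpace (B.V n) := fun _ => ⊥
  have _ : ∀ n, DiscreteTopology (B.V n) := fun _ => ⟨rfl⟩
  have _ : ∀ n, Finite (B.E n) := fun n => @Finite.of_fintype _ (B.fintE n)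
  have hclosed : IsClosed {x : ∀ n, B.E n | ∀ n, B.tgt (x n) = B.src (x (n + 1))} := by
    rw [Set.ofPred_forall]
    exact isClosed_iInter fun n => isClosed_eq
      (continuous_of_discreteTopology.comp (continuous_apply n))
      (continuous_of_discreteTopology.comp (continuous_apply (n + 1)))
  exact isCompact_iff_compactSpace.mp hclosed.isCompact

variable {B} {B' : BDiagram}

theorem exists_modulus {g : B'.PathSpace → B.PathSpace} (hg : Continuous g) (k : ℕ) :
    ∃ r, ∀ x y : B'.PathSpace, (∀ i < r, x.1 i = y.1 i) →
      ∀ i < k, (g x).1 i = (g y).1 i := by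
  have _ := B'.compactSpace_pathSpace
  have hball : ∀ a : B'.PathSpace, ∃ r, ∀ b : B'.PathSpace,
      (∀ i < r, b.1 i = a.1 i) → ∀ i < k, (g b).1 i = (g a).1 i := fun a =>
    B'.exists_cylinder_subset
      ((B.isClopen_setOf_forall_lt (fun i e => e = (g a).1 i) k).isOpen.preimage hg)
      (x := a) fun _ _ => rfl
  choose r hr using hball
  obtain ⟨t, ht⟩ := isCompact_univ.elim_finite_subcover
    (fun a => {b : B'.PathSpace | ∀ i < r a, b.1 i = a.1 i})
    (fun a => (B'.isClopen_setOf_forall_lt (fun i e => e = a.1 i) (r a)).isOpen)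
    fun a _ => Set.mem_iUnion.2 ⟨a, fun _ _ => rfl⟩
  refine ⟨t.sup r, fun x y hxy i hi => ?_⟩
  obtain ⟨c, hct, hxc⟩ := Set.mem_iUnion₂.1 (ht (Set.mem_univ x))
  have hrc : r c ≤ t.sup r := Finset.le_sup hct
  have hyc : ∀ i < r c, y.1 i = c.1 i := fun i hi' => (hxy i (by omega)).symm.trans (hxc i hi')
  rw [hr c x hxc i hi, hr c y hyc i hi]

theorem exists_isMinEdge_modulus {g : B'.PathSpace → B.PathSpace} (hg : Continuous g)
    (hmin : ∀ z, B'.IsMinPath z → B.IsMinPath (g z)) (j : ℕ) :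
    ∃ j', ∀ z : B'.PathSpace, (∀ i < j', B'.IsMinEdge (z.1 i)) →
      ∀ i < j, B.IsMinEdge ((g z).1 i) := by
  have _ := B'.compactSpace_pathSpace
  set U := g ⁻¹' {x : B.PathSpace | ∀ i < j, B.IsMinEdge (x.1 i)}
  have hU : IsOpen U := (B.isClopen_setOf_forall_lt (fun _ e => B.IsMinEdge e) j).isOpen.preimage hg
  set C : ℕ → Set B'.PathSpace := fun j' => {z | ∀ i < j', B'.IsMinEdge (z.1 i)}
  have hC : ∀ j', IsClosed (C j') := fun j' =>
    (B'.isClopen_setOf_forall_lt (fun _ e => B'.IsMinEdge e) j').isClosed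
  have hempty : Uᶜ ∩ ⋂ j', C j' = ∅ := by
    refine Set.eq_empty_of_forall_notMem fun z ⟨hzU, hzC⟩ => hzU fun i _ => ?_
    exact hmin z (fun n => Set.mem_iInter.1 hzC (n + 1) n (by omega)) i
  obtain ⟨t, ht⟩ := hU.isClosed_compl.isCompact.elim_finite_subfamily_closed C hC hempty
  refine ⟨t.sup id, fun z hz => by_contra fun hzU => ?_⟩
  refine Set.eq_empty_iff_forall_notMem.1 ht z
    ⟨hzU, Set.mem_iInter₂.2 fun j' hj' i hi => ?_⟩
  exact hz i (lt_of_lt_of_le hi (Finset.le_sup (f := id) hj'))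

section Telescope

variable {ns : ℕ → ℕ} {hmono : StrictMono ns} {h0 : ns 0 = 0}

theorem continuous_teleEquiv : Continuous (B.teleEquiv ns hmono h0) := by
  refine (B.Telescope ns hmono h0).continuous_pathSpace_iff.2 fun l =>
    B.continuous_of_forall_exists_cylinder fun x => ⟨ns (l + 1), fun y hy => ?_⟩
  refine B.teleMap_apply_eq_iff.2 fun i hi => hy _ ?_
  omega

theorem continuous_teleEquiv_symm : Continuous (B.teleEquiv ns hmono h0).symm := by
  refine B.continuous_pathSpace_iff.2 fun n =>
    (B.Telescope ns hmono h0).continuous_of_forall_exists_cylinder fun x => ?_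
  obtain ⟨l, i, hi, h⟩ := exists_block hmono h0 n
  refine ⟨l + 1, fun y hy => ?_⟩
  change B.teleInvFun y n = B.teleInvFun x n
  rw [B.teleInvFun_eq y hi h, B.teleInvFun_eq x hi h, hy l (Nat.lt_add_one l)]

end Telescope

end Topology

section Conjugacy

variable {B B' : BDiagram} {T : B.PathSpace ≃ B.PathSpace} {T' : B'.PathSpace ≃ B'.PathSpace}

theorem SameCoding.mono {k k' : ℕ} {x y : B.PathSpace} (h : B.SameCoding T k x y)
    (hk : k' ≤ k) : B.SameCoding T k' x y :=
  fun m i hi => h m i (by omega)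

theorem HasCut.mono {j j' : ℕ} {x y : B.PathSpace} (h : B.HasCut T j x y) (hj : j' ≤ j) :
    B.HasCut T j' x y := by
  obtain ⟨m, hx, hy⟩ := h
  exact ⟨m, fun i hi => hx i (by omega), fun i hi => hy i (by omega)⟩

theorem exists_depthPair_of_sameCoding {k : ℕ} {x y : B.PathSpace} (hxy : x ≠ y)
    (h : B.SameCoding T k x y) : ∃ d, k ≤ d ∧ B.DepthPair T d x y := by
  classical
  have hex : ∃ n, ¬ B.SameCoding T n x y := by
    obtain ⟨i, hi⟩ : ∃ i, x.1 i ≠ y.1 i := by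
      by_contra! h
      exact hxy (B.path_ext h)
    exact ⟨i + 1, fun h => hi (h 0 i (Nat.lt_add_one i))⟩
  have hk : k < Nat.find hex := by
    by_contra! hle
    exact Nat.find_spec hex (h.mono hle)
  refine ⟨Nat.find hex - 1, by omega, hxy, ?_, ?_⟩
  · exact not_not.1 (Nat.find_min hex (by omega))
  · rw [Nat.sub_add_cancel (by omega)]
    exact Nat.find_spec hex

theorem iterZ_apply_of_semiconj (φ : B.PathSpace ≃ B'.PathSpace)
    (hφ : ∀ x, φ (T x) = T' (φ x)) (m : ℤ) (x : B.PathSpace) :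
    B'.iterZ T' m (φ x) = φ (B.iterZ T m x) := by
  obtain rfl : T' = φ.permCongr T := Equiv.ext fun x' => by
    rw [Equiv.permCongr_apply, hφ, Equiv.apply_symm_apply]
  exact iterZ_permCongr T m x

section Topology

attribute [local instance] pathTopology

theorem exists_sameCoding_modulus {ψ : B'.PathSpace ≃ B.PathSpace} (hψ : Continuous ψ)
    (hψT : ∀ x, ψ (T' x) = T (ψ x)) (k : ℕ) :
    ∃ r, ∀ x y, B'.SameCoding T' r x y → B.SameCoding T k (ψ x) (ψ y) := by
  obtain ⟨r, hr⟩ := exists_modulus hψ k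
  refine ⟨r, fun x y hxy m i hi => ?_⟩
  rw [iterZ_apply_of_semiconj ψ hψT, iterZ_apply_of_semiconj ψ hψT]
  exact hr _ _ (hxy m) i hi

theorem exists_hasCut_modulus {ψ : B'.PathSpace ≃ B.PathSpace} (hψ : Continuous ψ)
    (hψT : ∀ x, ψ (T' x) = T (ψ x)) (hmin : ∀ z, B'.IsMinPath z → B.IsMinPath (ψ z))
    (j : ℕ) :
    ∃ j', ∀ x y, B'.HasCut T' j' x y → B.HasCut T j (ψ x) (ψ y) := by
  obtain ⟨j', hj'⟩ := exists_isMinEdge_modulus hψ hmin j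
  refine ⟨j', fun x y ⟨m, hx, hy⟩ => ⟨m, ?_, ?_⟩⟩
  · rw [iterZ_apply_of_semiconj ψ hψT]
    exact hj' _ hx
  · rw [iterZ_apply_of_semiconj ψ hψT]
    exact hj' _ hy

end Topology

theorem isMinPath_symm_apply {φ : B.PathSpace ≃ B'.PathSpace} (hp : B.ProperlyOrdered)
    (hp' : B'.ProperlyOrdered) (hφ : ∀ x, B.IsMinPath x → B'.IsMinPath (φ x))
    {z : B'.PathSpace} (hz : B'.IsMinPath z) : B.IsMinPath (φ.symm z) := by
  obtain ⟨x, hx, -⟩ := hp.1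
  rw [hp'.1.unique hz (hφ x hx), φ.symm_apply_apply]
  exact hx

end Conjugacy

end BDiagram

open BDiagram

theorem Conjugate.frequently_veryWellTimed {S S' : BVSystem} (h : Conjugate S S')
    (hS' : S'.B.VeryWellTimed S'.T) :
    ∀ K : ℕ, ∃ k : ℕ, K ≤ k ∧ 1 ≤ k ∧
      ∃ x y : S.B.PathSpace, S.B.DepthPair S.T k x y ∧
        ∀ j : ℕ, k < j → S.B.HasCut S.T j x y := by
  obtain ⟨φ, -, hφsymm, hφT, hφmin⟩ := h
  have hψT : ∀ x, φ.symm (S'.T x) = S.T (φ.symm x) := fun x => by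
    rw [Equiv.symm_apply_eq, hφT, Equiv.apply_symm_apply]
  have hmin := fun z => isMinPath_symm_apply S.proper S'.proper hφmin (z := z)
  intro K
  obtain ⟨r, hr⟩ := exists_sameCoding_modulus hφsymm hψT (K + 1)
  obtain ⟨x, y, ⟨hne, hsame, -⟩, hcut⟩ := hS' (r + 1) (by omega)
  obtain ⟨d, hd, hdepth⟩ := exists_depthPair_of_sameCoding (φ.symm.injective.ne hne)
    (hr x y (hsame.mono (by omega)))
  refine ⟨d, by omega, by omega, _, _, hdepth, fun j _ => ?_⟩
  obtain ⟨j', hj'⟩ := exists_hasCut_modulus hφsymm hψT hmin j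
  exact hj' x y ((hcut (max (r + 2) j') (by omega)).mono (le_max_right _ _))

theorem BVSystem.conjugate_telescope (S : BVSystem) {ns : ℕ → ℕ} {hmono : StrictMono ns}
    {h0 : ns 0 = 0} {T' : (S.B.Telescope ns hmono h0).PathSpace ≃
      (S.B.Telescope ns hmono h0).PathSpace} (hT' : (S.B.Telescope ns hmono h0).IsVershik T') :
    Conjugate S ⟨S.B.Telescope ns hmono h0, T', S.B.telescope_properlyOrdered S.proper,
      S.B.telescope_simple S.simple, hT'⟩ := by
  obtain rfl : T' = (S.B.teleEquiv ns hmono h0).permCongr S.T :=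
    isVershik_unique _ (S.B.telescope_properlyOrdered S.proper) hT'
      (S.B.isVershik_telescope S.vershik)
  exact ⟨S.B.teleEquiv ns hmono h0, continuous_teleEquiv, continuous_teleEquiv_symm,
    fun x => by simp, fun _ hx => S.B.isMinPath_teleMap hx⟩

/-- For a simple, properly ordered Bratteli–Vershik system the
following are equivalent: (1) for infinitely many `k ≥ 1` there is a depth `k`
pair with a `j` cut for every `j > k`; (2) some telescoping of it is very well
timed; (3) it is conjugate to a very well timed system. -/
theorem veryWellTimed_tfae (S : BVSystem) :
    List.TFAE
      [∀ K : ℕ, ∃ k : ℕ, K ≤ k ∧ 1 ≤ k ∧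
         ∃ x y : S.B.PathSpace, S.B.DepthPair S.T k x y ∧
           ∀ j : ℕ, k < j → S.B.HasCut S.T j x y,
       ∃ (ns : ℕ → ℕ) (hmono : StrictMono ns) (h0 : ns 0 = 0)
         (T' : (S.B.Telescope ns hmono h0).PathSpace ≃
            (S.B.Telescope ns hmono h0).PathSpace),
         (S.B.Telescope ns hmono h0).IsVershik T' ∧
         (S.B.Telescope ns hmono h0).VeryWellTimed T',
       ∃ S' : BVSystem, Conjugate S S' ∧ S'.B.VeryWellTimed S'.T] := by
  tfae_have 1 → 2 := S.B.exists_telescope_veryWellTimed S.vershik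
  tfae_have 2 → 3 := fun ⟨_, _, _, _, hT', hvwt⟩ => ⟨_, S.conjugate_telescope hT', hvwt⟩
  tfae_have 3 → 1 := fun ⟨_, hconj, hvwt⟩ => hconj.frequently_veryWellTimed hvwt
  tfae_finish
end

section
/- Let (X,T) be a simple, properly ordered Bratteli-Vershik system and suppose that level n+1 of its diagram is uniformly ordered and has more than one vertex. Then there is a depth n pair of paths with an (n+1) cut. -/
set_option autoImplicit false

/-! Pick distinct vertices `v`, `w` at level `n+1` and paths `x`, `y` that are minimal from the
root to `v`, resp. `w`: they have an `(n+1)` cut at time `0` and differ at edge `n`. Along any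
orbit, the position of the initial segment in the basic block of its level-`n+1` vertex goes up
by one under `T`, or drops from the last position to `0` when the block is exhausted. Every
block has length a multiple of `|P|`, so the position modulo `|P|` always advances by one. As `x`
and `y` both start at position `0`, `T^m x` and `T^m y` sit at the same place of `P` for every
`m`, hence share their first `n` edges. -/

theorem Equiv.Perm.zpow_apply_rel {α : Type*} (σ : Equiv.Perm α) {R : α → α → Prop}
    (hR : ∀ x y, R (σ x) (σ y) ↔ R x y) {x y : α} (h : R x y) (m : ℤ) :
    R ((σ ^ m) x) ((σ ^ m) y) := by
  induction m using Int.induction_on with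
  | zero => simpa using h
  | succ i ih => rwa [add_comm, zpow_one_add, Equiv.Perm.mul_apply, Equiv.Perm.mul_apply, hR]
  | pred i ih =>
      rwa [show -(i : ℤ) = 1 + (-i - 1) by ring, zpow_one_add, Equiv.Perm.mul_apply,
        Equiv.Perm.mul_apply, hR] at ih

theorem Function.exists_last_ne {ι : Type*} [LinearOrder ι] [Fintype ι] {β : ι → Type*}
    {f g : ∀ i, β i} (h : f ≠ g) : ∃ D, f D ≠ g D ∧ ∀ i, D < i → f i = g i := by
  classical
  have hs : (Finset.univ.filter fun i => f i ≠ g i).Nonempty := by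
    obtain ⟨i, hi⟩ := Function.ne_iff.1 h
    exact ⟨i, by simpa using hi⟩
  refine ⟨_, (Finset.mem_filter.1 (Finset.max'_mem _ hs)).2, fun i hi => ?_⟩
  by_contra hne
  exact (Finset.le_max' _ i (by simpa using hne)).not_gt hi

section Enumeration

variable {α : Type*} {r : α → α → Prop} {K : ℕ} {e : Fin K ≃ α}

theorem val_symm_eq_zero_of_forall_not_rel (he : ∀ i j, i < j ↔ r (e i) (e j)) {q : α}
    (hq : ∀ a, ¬ r a q) : (e.symm q).val = 0 := by
  by_contra h0
  have hlt : (⟨0, (e.symm q).pos⟩ : Fin K) < e.symm q := by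
    rw [Fin.lt_def]; exact Nat.pos_of_ne_zero h0
  exact hq _ (by simpa using (he _ _).1 hlt)

theorem val_symm_add_one_eq_of_forall_not_rel (he : ∀ i j, i < j ↔ r (e i) (e j)) {q : α}
    (hq : ∀ a, ¬ r q a) : (e.symm q).val + 1 = K := by
  have hqK := (e.symm q).isLt
  by_contra hne
  have hlt : e.symm q < ⟨K - 1, by omega⟩ := by
    show (e.symm q).val < K - 1
    omega
  exact hq _ (by simpa using (he _ _).1 hlt)

theorem val_symm_eq_add_one_of_covBy (he : ∀ i j, i < j ↔ r (e i) (e j)) {q q' : α}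
    (hqq' : r q q') (hcov : ∀ s, r q s → s = q' ∨ r q' s) :
    (e.symm q').val = (e.symm q).val + 1 := by
  have hlt : e.symm q < e.symm q' := (he _ _).2 (by simpa using hqq')
  rw [Fin.lt_def] at hlt
  by_contra hne
  let c : Fin K := ⟨(e.symm q).val + 1, by have := (e.symm q').isLt; omega⟩
  have hqc : e.symm q < c := by rw [Fin.lt_def]; exact Nat.lt_succ_self _
  rcases hcov (e c) (by simpa using (he _ _).1 hqc) with h | h
  · exact hne (by rw [← h, Equiv.symm_apply_apply])
  · have := (he (e.symm q') c).2 (by simpa using h)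
    rw [Fin.lt_def] at this
    exact absurd this (by simp only [c]; omega)

end Enumeration

namespace BDiagram

variable (B : BDiagram)

theorem exists_minEdge {k : ℕ} (v : B.V (k + 1)) :
    ∃ e : B.E k, B.tgt e = v ∧ B.IsMinEdge e := by
  have := B.fintE k
  have : IsTrans (B.E k) B.elt := ⟨B.elt_trans k⟩
  have : Std.Irrefl (B.elt (n := k)) := ⟨B.elt_irrefl k⟩
  obtain ⟨e0, he0⟩ := B.hasIn k v
  obtain ⟨e, he, hmin⟩ :=
    (Finite.wellFounded_of_trans_of_irrefl B.elt).has_min {e | B.tgt e = v} ⟨e0, he0⟩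
  exact ⟨e, he, fun e' h' => hmin e' ((B.elt_tgt k e' e h').trans he) h'⟩

/-- Below level `k` this is junk; from level `k` on it follows a chosen outgoing edge. -/
noncomputable def rayVert (k : ℕ) (v : B.V k) : (i : ℕ) → B.V i
  | 0 => if h : k = 0 then B.castV h v else Classical.choice (B.nonV 0)
  | i + 1 => if h : k = i + 1 then B.castV h v else B.tgt (B.hasOut i (rayVert k v i)).choose

def IsRayFrom (k : ℕ) (v : B.V k) (f : ∀ i, B.E i) : Prop :=
  B.src (f k) = v ∧ ∀ i, k ≤ i → B.tgt (f i) = B.src (f (i + 1))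

theorem exists_isRayFrom (k : ℕ) (v : B.V k) : ∃ f, B.IsRayFrom k v f := by
  refine ⟨fun i => (B.hasOut i (B.rayVert k v i)).choose, ?_, fun i hi => ?_⟩
  · rw [(B.hasOut k _).choose_spec]
    cases k <;> simp [rayVert, castV]
  · rw [(B.hasOut (i + 1) _).choose_spec, rayVert, dif_neg (by omega)]

variable {B} in
theorem IsRayFrom.update {k : ℕ} {v : B.V (k + 1)} {f : ∀ i, B.E i}
    (hf : B.IsRayFrom (k + 1) v f) {e : B.E k} (he : B.tgt e = v) :
    B.IsRayFrom k (B.src e) (Function.update f k e) := by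
  refine ⟨by rw [Function.update_self], fun i hi => ?_⟩
  rcases hi.eq_or_lt with rfl | hi
  · rw [Function.update_self, Function.update_of_ne (by omega), he, hf.1]
  · rw [Function.update_of_ne (by omega), Function.update_of_ne (by omega)]
    exact hf.2 i hi

theorem exists_minPath_of_isRayFrom : ∀ (k : ℕ) (v : B.V k) (f : ∀ i, B.E i),
    B.IsRayFrom k v f →
      ∃ x : B.PathSpace, (∀ i < k, B.IsMinEdge (x.1 i)) ∧ ∀ i, k ≤ i → x.1 i = f i
  | 0, _, f, hf => ⟨⟨f, fun i => hf.2 i (Nat.zero_le i)⟩, fun _ hi => absurd hi (by omega),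
      fun _ _ => rfl⟩
  | k + 1, v, f, hf => by
    obtain ⟨e, hev, hemin⟩ := B.exists_minEdge v
    obtain ⟨x, hxmin, hxf⟩ := exists_minPath_of_isRayFrom k _ _ (hf.update hev)
    refine ⟨x, fun i hi => ?_, fun i hi => ?_⟩
    · rcases Nat.lt_succ_iff_lt_or_eq.1 hi with hi | rfl
      · exact hxmin i hi
      · rw [hxf i le_rfl, Function.update_self]
        exact hemin
    · rw [hxf i (by omega), Function.update_of_ne (by omega)]

theorem exists_minPath_through (k : ℕ) (v : B.V k) :
    ∃ x : B.PathSpace, (∀ i < k, B.IsMinEdge (x.1 i)) ∧ B.pathVert x k = v := by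
  obtain ⟨f, hf⟩ := B.exists_isRayFrom k v
  obtain ⟨x, hmin, hxf⟩ := B.exists_minPath_of_isRayFrom k v f hf
  exact ⟨x, hmin, by rw [pathVert, hxf k le_rfl, hf.1]⟩

theorem exists_path_update (z : B.PathSpace) (j : ℕ) (e : B.E j) (he : B.tgt e = B.tgt (z.1 j)) :
    ∃ u : B.PathSpace, u.1 j = e ∧ ∀ i, j < i → u.1 i = z.1 i := by
  have hz : B.IsRayFrom (j + 1) (B.src (z.1 (j + 1))) z.1 := ⟨rfl, fun i _ => z.2 i⟩
  obtain ⟨u, -, hu⟩ := B.exists_minPath_of_isRayFrom j _ _ (hz.update (he.trans (z.2 j)))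
  exact ⟨u, by rw [hu j le_rfl, Function.update_self],
    fun i hi => by rw [hu i hi.le, Function.update_of_ne hi.ne']⟩

theorem finLT_total {k : ℕ} {v : B.V k} {q r : B.FinPath k} (hq : B.EndsAt q v)
    (hr : B.EndsAt r v) (hne : q ≠ r) : B.finLT q r ∨ B.finLT r q := by
  obtain ⟨⟨D, hDk⟩, hD, hlast⟩ := Function.exists_last_ne fun h => hne (Subtype.ext h)
  have htgt : B.tgt (q.1 ⟨D, hDk⟩) = B.tgt (r.1 ⟨D, hDk⟩) := by
    by_cases hD1 : D + 1 < k
    · rw [q.2 D hD1, r.2 D hD1, hlast ⟨D + 1, hD1⟩ (by simp [Fin.lt_def])]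
    · rw [hq D (by omega), hr D (by omega)]
  rcases B.elt_total _ _ _ htgt hD with h | h
  · exact Or.inl ⟨D, hDk, h, fun i hi hDi => hlast ⟨i, hi⟩ hDi⟩
  · exact Or.inr ⟨D, hDk, h, fun i hi hDi => (hlast ⟨i, hi⟩ hDi).symm⟩

theorem not_finLT_of_isMinEdge {k : ℕ} {q : B.FinPath k}
    (hq : ∀ i (hi : i < k), B.IsMinEdge (q.1 ⟨i, hi⟩)) (r : B.FinPath k) : ¬ B.finLT r q :=
  fun ⟨N, hN, h, _⟩ => hq N hN _ h

theorem not_finLT_of_isMaxEdge {k : ℕ} {q : B.FinPath k}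
    (hq : ∀ i (hi : i < k), B.IsMaxEdge (q.1 ⟨i, hi⟩)) (r : B.FinPath k) : ¬ B.finLT q r :=
  fun ⟨N, hN, h, _⟩ => hq N hN _ h

section Vershik

variable {B} {T : B.PathSpace ≃ B.PathSpace} {z : B.PathSpace} {N : ℕ}

/- In the next three lemmas a counterexample would give, via `exists_path_update`, a path
strictly between `z` and `T z`. -/

theorem IsVershik.isMinEdge_of_lt (hT : B.IsVershik T) (hz : ¬ B.IsMaxPath z)
    (hN : B.elt (z.1 N) ((T z).1 N)) (hagree : ∀ i, N < i → z.1 i = (T z).1 i) {i : ℕ}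
    (hi : i < N) : B.IsMinEdge ((T z).1 i) := by
  intro e he
  obtain ⟨u, hui, hu⟩ := B.exists_path_update (T z) i e (B.elt_tgt _ _ _ he)
  refine (hT.1 z hz).2 u ⟨N, by rwa [hu N hi], fun l hl => ?_⟩ ⟨i, by rwa [hui], hu⟩
  rw [hu l (hi.trans hl), hagree l hl]

theorem IsVershik.le_of_not_isMaxEdge (hT : B.IsVershik T) (hz : ¬ B.IsMaxPath z)
    (hN : B.elt (z.1 N) ((T z).1 N)) (hagree : ∀ i, N < i → z.1 i = (T z).1 i) {j : ℕ}
    (hj : ¬ B.IsMaxEdge (z.1 j)) : N ≤ j := by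
  by_contra! hjN
  obtain ⟨e, he⟩ : ∃ e, B.elt (z.1 j) e := by simpa [IsMaxEdge] using hj
  obtain ⟨u, huj, hu⟩ := B.exists_path_update z j e (B.elt_tgt _ _ _ he).symm
  refine (hT.1 z hz).2 u ⟨j, by rwa [huj], fun l hl => (hu l hl).symm⟩
    ⟨N, by rwa [hu N hjN], fun l hl => ?_⟩
  rw [hu l (hjN.trans hl), hagree l hl]

theorem IsVershik.eq_or_elt_of_elt (hT : B.IsVershik T) (hz : ¬ B.IsMaxPath z)
    (hN : B.elt (z.1 N) ((T z).1 N)) (hagree : ∀ i, N < i → z.1 i = (T z).1 i) {e : B.E N}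
    (he : B.elt (z.1 N) e) : e = (T z).1 N ∨ B.elt ((T z).1 N) e := by
  by_contra! h
  have htgt : B.tgt e = B.tgt ((T z).1 N) := (B.elt_tgt _ _ _ he).symm.trans (B.elt_tgt _ _ _ hN)
  have hlt : B.elt e ((T z).1 N) := (B.elt_total _ _ _ htgt h.1).resolve_right h.2
  obtain ⟨u, huN, hu⟩ := B.exists_path_update z N e (B.elt_tgt _ _ _ he).symm
  exact (hT.1 z hz).2 u ⟨N, by rwa [huN], fun l hl => (hu l hl).symm⟩
    ⟨N, by rwa [huN], fun l hl => by rw [hu l hl, hagree l hl]⟩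

theorem IsVershik.isMinEdge_of_isMaxEdge (hT : B.IsVershik T) {k : ℕ}
    (hz : ∀ j < k, B.IsMaxEdge (z.1 j)) {i : ℕ} (hi : i < k) : B.IsMinEdge ((T z).1 i) := by
  by_cases hmax : B.IsMaxPath z
  · exact hT.2 z hmax i
  obtain ⟨N, hN, hagree⟩ := (hT.1 z hmax).1
  have hkN : k ≤ N := by
    by_contra! h
    exact hz N h _ hN
  exact hT.isMinEdge_of_lt hmax hN hagree (by omega)

theorem IsVershik.eq_or_finLT_of_finLT (hT : B.IsVershik T) (hz : ¬ B.IsMaxPath z)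
    (hN : B.elt (z.1 N) ((T z).1 N)) (hagree : ∀ i, N < i → z.1 i = (T z).1 i) {k : ℕ}
    {r : B.FinPath k} (hr : B.EndsAt r (B.pathVert (T z) k))
    (hzr : B.finLT (B.pathInit z k) r) :
    r = B.pathInit (T z) k ∨ B.finLT (B.pathInit (T z) k) r := by
  obtain ⟨M, hMk, hM, hagreeM⟩ := hzr
  rcases lt_trichotomy M N with hMN | rfl | hNM
  · exact absurd (hT.le_of_not_isMaxEdge (j := M) hz hN hagree fun hmax => hmax _ hM) hMN.not_ge
  · rcases hT.eq_or_elt_of_elt hz hN hagree hM with heq | hlt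
    · by_cases hrt : r = B.pathInit (T z) k
      · exact Or.inl hrt
      refine Or.inr ((B.finLT_total (B.pathInit_endsAt (T z) k) hr (Ne.symm hrt)).resolve_right ?_)
      rintro ⟨D, hDk, hD, -⟩
      rcases lt_or_ge D M with hDM | hMD
      · exact hT.isMinEdge_of_lt hz hN hagree hDM _ hD
      · have hrD : r.1 ⟨D, hDk⟩ = (T z).1 D := by
          rcases hMD.eq_or_lt with rfl | hMD
          · exact heq
          · rw [← hagreeM D hDk hMD]
            exact hagree D hMD
        exact B.elt_irrefl _ _ (hrD ▸ hD)
    · exact Or.inr ⟨M, hMk, hlt, fun i hi hMi => (hagree i hMi).symm.trans (hagreeM i hi hMi)⟩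
  · refine Or.inr ⟨M, hMk, ?_, fun i hi hMi =>
      (hagree i (hNM.trans hMi)).symm.trans (hagreeM i hi hMi)⟩
    rw [show (B.pathInit (T z) k).1 ⟨M, hMk⟩ = z.1 M from (hagree M hNM).symm]
    exact hM

end Vershik

section BlockPosition

variable {B} {k : ℕ} {K : B.V k → ℕ}

def blockPos (enum : ∀ v, Fin (K v) ≃ { q : B.FinPath k // B.EndsAt q v })
    (z : B.PathSpace) : ℕ :=
  ((enum (B.pathVert z k)).symm ⟨B.pathInit z k, B.pathInit_endsAt z k⟩).val

theorem blockPos_eq_of_pathVert_eq (enum : ∀ v, Fin (K v) ≃ { q : B.FinPath k // B.EndsAt q v })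
    {z : B.PathSpace} {v : B.V k} (hv : B.pathVert z k = v) :
    blockPos enum z = ((enum v).symm ⟨B.pathInit z k, hv ▸ B.pathInit_endsAt z k⟩).val := by
  subst hv
  rfl

variable {enum : ∀ v, Fin (K v) ≃ { q : B.FinPath k // B.EndsAt q v }}
  (henum : ∀ v i j, i < j ↔ B.finLT (enum v i).1 (enum v j).1)
include henum

theorem blockPos_eq_zero {z : B.PathSpace} (hz : ∀ i < k, B.IsMinEdge (z.1 i)) :
    blockPos enum z = 0 :=
  val_symm_eq_zero_of_forall_not_rel (r := fun a b => B.finLT a.1 b.1) (henum _)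
    fun a => B.not_finLT_of_isMinEdge hz a.1

theorem blockPos_add_one {z : B.PathSpace} (hz : ∀ i < k, B.IsMaxEdge (z.1 i)) :
    blockPos enum z + 1 = K (B.pathVert z k) :=
  val_symm_add_one_eq_of_forall_not_rel (r := fun a b => B.finLT a.1 b.1) (henum _)
    fun a => B.not_finLT_of_isMaxEdge hz a.1

variable {T : B.PathSpace ≃ B.PathSpace}

theorem IsVershik.blockPos_apply (hT : B.IsVershik T) {z : B.PathSpace} {j : ℕ} (hjk : j < k)
    (hj : ¬ B.IsMaxEdge (z.1 j)) : blockPos enum (T z) = blockPos enum z + 1 := by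
  have hz : ¬ B.IsMaxPath z := fun h => hj (h j)
  obtain ⟨N, hN, hagree⟩ := (hT.1 z hz).1
  have hNk : N < k := (hT.le_of_not_isMaxEdge hz hN hagree hj).trans_lt hjk
  rw [blockPos_eq_of_pathVert_eq enum (congrArg B.src (hagree k hNk))]
  refine val_symm_eq_add_one_of_covBy (r := fun a b => B.finLT a.1 b.1) (henum _)
    ⟨N, hNk, hN, fun i _ hNi => hagree i hNi⟩ fun s hs => ?_
  rcases hT.eq_or_finLT_of_finLT hz hN hagree s.2 hs with h | h
  · exact Or.inl (Subtype.ext h)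
  · exact Or.inr h

theorem IsVershik.blockPos_apply_modEq (hT : B.IsVershik T) {p : ℕ} (hp : ∀ v, p ∣ K v)
    (z : B.PathSpace) : blockPos enum (T z) ≡ blockPos enum z + 1 [MOD p] := by
  by_cases h : ∃ j < k, ¬ B.IsMaxEdge (z.1 j)
  · obtain ⟨j, hjk, hj⟩ := h
    rw [hT.blockPos_apply henum hjk hj]
  · push Not at h
    rw [blockPos_eq_zero henum fun i hi => hT.isMinEdge_of_isMaxEdge h hi,
      blockPos_add_one henum h]
    exact (Nat.modEq_zero_iff_dvd.2 (hp _)).symm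

theorem IsVershik.blockPos_iterZ_modEq (hT : B.IsVershik T) {p : ℕ} (hp : ∀ v, p ∣ K v)
    {x y : B.PathSpace} (h : blockPos enum x ≡ blockPos enum y [MOD p]) (m : ℤ) :
    blockPos enum (B.iterZ T m x) ≡ blockPos enum (B.iterZ T m y) [MOD p] := by
  have hstep := hT.blockPos_apply_modEq henum hp
  refine Equiv.Perm.zpow_apply_rel (T : Equiv.Perm B.PathSpace)
    (R := fun a b => blockPos enum a ≡ blockPos enum b [MOD p]) (fun a b => ⟨fun hab => ?_,
    fun hab => (hstep a).trans ((hab.add_right 1).trans (hstep b).symm)⟩) h m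
  exact Nat.ModEq.add_right_cancel' 1 ((hstep a).symm.trans (hab.trans (hstep b)))

end BlockPosition

theorem IsVershik.sameCoding_of_uniformlyOrderedLevel {B : BDiagram}
    {T : B.PathSpace ≃ B.PathSpace} (hT : B.IsVershik T) {n : ℕ}
    (huo : B.UniformlyOrderedLevel n) {x y : B.PathSpace}
    (hx : ∀ i < n + 1, B.IsMinEdge (x.1 i)) (hy : ∀ i < n + 1, B.IsMinEdge (y.1 i)) :
    B.SameCoding T n x y := by
  obtain ⟨p, hp, P, hP⟩ := huo
  choose K _ enum henum htrunc using hP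
  have hblock : ∀ z : B.PathSpace, B.truncTo n (Nat.le_succ n) (B.pathInit z (n + 1)) =
      P ⟨blockPos enum z % p, Nat.mod_lt _ hp⟩ := fun z => by
    have h := htrunc _ ((enum _).symm ⟨_, B.pathInit_endsAt z (n + 1)⟩)
    rw [Equiv.apply_symm_apply] at h
    exact h
  have hmod := hT.blockPos_iterZ_modEq henum (fun v => dvd_mul_left p (K v))
    (x := x) (y := y) (by rw [blockPos_eq_zero henum hx, blockPos_eq_zero henum hy])
  intro m i hi
  calc (B.iterZ T m x).1 i
      = (P ⟨blockPos enum (B.iterZ T m x) % p, Nat.mod_lt _ hp⟩).1 ⟨i, hi⟩ :=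
        congrArg (fun q => q.1 ⟨i, hi⟩) (hblock _)
    _ = (P ⟨blockPos enum (B.iterZ T m y) % p, Nat.mod_lt _ hp⟩).1 ⟨i, hi⟩ :=
        congrArg (fun j => (P j).1 ⟨i, hi⟩) (Fin.ext (hmod m))
    _ = (B.iterZ T m y).1 i := (congrArg (fun q => q.1 ⟨i, hi⟩) (hblock _)).symm

end BDiagram

theorem uniformlyOrdered_level_gives_cut_general
    (B : BDiagram) (T : B.PathSpace ≃ B.PathSpace)
    (hT : B.IsVershik T)
    (n : ℕ) (huo : B.UniformlyOrderedLevel n) (hwide : 1 < Nat.card (B.V (n + 1))) :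
    ∃ x y : B.PathSpace, B.DepthPair T n x y ∧ B.HasCut T (n + 1) x y := by
  have := B.fintV (n + 1)
  obtain ⟨v, w, hvw⟩ := (Finite.one_lt_card_iff_nontrivial.1 hwide).exists_pair_ne
  obtain ⟨x, hx, rfl⟩ := B.exists_minPath_through (n + 1) v
  obtain ⟨y, hy, rfl⟩ := B.exists_minPath_through (n + 1) w
  have hxy : x.1 n ≠ y.1 n := fun h =>
    hvw (by rw [BDiagram.pathVert, BDiagram.pathVert, ← x.2 n, ← y.2 n, h])
  refine ⟨x, y, ⟨fun h => hxy (by rw [h]), hT.sameCoding_of_uniformlyOrderedLevel huo hx hy,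
    fun h => hxy (by simpa [BDiagram.iterZ] using h 0 n n.lt_succ_self)⟩,
    0, by simpa [BDiagram.iterZ] using hx, by simpa [BDiagram.iterZ] using hy⟩

/-- If level `n+1` of a simple, properly ordered Bratteli–Vershik
system is uniformly ordered and has more than one vertex, then there is a depth `n`
pair of paths with an `(n+1)` cut. -/
theorem uniformlyOrdered_level_gives_cut
    (B : BDiagram) (T : B.PathSpace ≃ B.PathSpace)
    (hproper : B.ProperlyOrdered) (hsimple : B.Simple) (hT : B.IsVershik T)
    (n : ℕ) (huo : B.UniformlyOrderedLevel n) (hwide : 1 < Nat.card (B.V (n + 1))) :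
    ∃ x y : B.PathSpace, B.DepthPair T n x y ∧ B.HasCut T (n + 1) x y :=
  uniformlyOrdered_level_gives_cut_general B T hT n huo hwide
end

section
/- Let (X,T) be a simple, properly ordered, deterministic Bratteli-Vershik system, and for each n >= 1 let k_n denote the number of vertices at level n. Then k_n >= k_{n+1} for all n >= 1, and there exists N such that k_n = 1 for all n >= N. -/
set_option autoImplicit false

namespace BDiagram

variable (B : BDiagram)

theorem exists_minEdge_into (n : ℕ) (w : B.V (n + 1)) :
    ∃ e : B.E n, B.tgt e = w ∧ B.IsMinEdge e := by
  classical
  letI : Fintype (B.E n) := B.fintE n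
  haveI : IsTrans (B.E n) B.elt := ⟨fun a b c => B.elt_trans n a b c⟩
  haveI : IsIrrefl (B.E n) B.elt := ⟨fun a => B.elt_irrefl n a⟩
  have hwf : WellFounded (B.elt (n := n)) := Finite.wellFounded_of_trans_of_irrefl _
  obtain ⟨e, he⟩ := B.hasIn n w
  obtain ⟨e₀, he₀, hmin⟩ := hwf.has_min {e | B.tgt e = w} ⟨e, he⟩
  refine ⟨e₀, he₀, fun e' h => hmin e' ?_ h⟩
  show B.tgt e' = w
  rw [B.elt_tgt n e' e₀ h, he₀]

noncomputable def minEdge (n : ℕ) (w : B.V (n + 1)) : B.E n :=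
  (B.exists_minEdge_into n w).choose

theorem minEdge_tgt (n : ℕ) (w : B.V (n + 1)) : B.tgt (B.minEdge n w) = w :=
  (B.exists_minEdge_into n w).choose_spec.1

theorem minEdge_min (n : ℕ) (w : B.V (n + 1)) : B.IsMinEdge (B.minEdge n w) :=
  (B.exists_minEdge_into n w).choose_spec.2

noncomputable def mSrc (n : ℕ) (w : B.V (n + 1)) : B.V n := B.src (B.minEdge n w)

theorem label_zero {n : ℕ} (e : B.E n) (h : B.IsMinEdge e) : B.edgeLabel e = 0 := by
  haveI : IsEmpty {e' : B.E n // B.elt e' e} := ⟨fun p => h p.1 p.2⟩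
  simp [edgeLabel, Nat.card_of_isEmpty]

theorem mSrc_injective (hdet : B.Deterministic) (n : ℕ) (hn : 1 ≤ n) :
    Function.Injective (B.mSrc n) := by
  intro w w' h
  by_contra hne
  have hee : B.minEdge n w ≠ B.minEdge n w' := fun he =>
    hne (by rw [← B.minEdge_tgt n w, ← B.minEdge_tgt n w', he])
  exact hdet n hn _ _ h hee
    (by rw [B.label_zero _ (B.minEdge_min n w), B.label_zero _ (B.minEdge_min n w')])

theorem castE_src {m n : ℕ} (h : m = n) (e : B.E m) :
    B.src (B.castE h e) = B.castV h (B.src e) := by subst h; rfl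

theorem castE_tgt {m n : ℕ} (h : m = n) (e : B.E m) :
    B.tgt (B.castE h e) = B.castV (congrArg Nat.succ h) (B.tgt e) := by subst h; rfl

theorem isMinEdge_castE {m n : ℕ} (h : m = n) (e : B.E m) (he : B.IsMinEdge e) :
    B.IsMinEdge (B.castE h e) := by subst h; exact he

noncomputable def mdown : (j : ℕ) → (w : B.V (j + 1)) → (i : ℕ) → i ≤ j → B.E i
  | 0, w, i, _ => B.castE (by omega : (0 : ℕ) = i) (B.minEdge 0 w)
  | j + 1, w, i, _ =>
      if h : i ≤ j then mdown j (B.src (B.minEdge (j + 1) w)) i h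
      else B.castE (by omega : j + 1 = i) (B.minEdge (j + 1) w)

theorem mdown_tgt_last : ∀ (j : ℕ) (w : B.V (j + 1)), B.tgt (B.mdown j w j le_rfl) = w := by
  intro j w
  cases j with
  | zero => simp only [mdown]; exact B.minEdge_tgt 0 w
  | succ j =>
      simp only [mdown]
      rw [dif_neg (by omega : ¬ j + 1 ≤ j)]
      exact B.minEdge_tgt _ w

theorem mdown_chain : ∀ (j : ℕ) (w : B.V (j + 1)) (i : ℕ) (h : i + 1 ≤ j) (h' : i ≤ j),
    B.tgt (B.mdown j w i h') = B.src (B.mdown j w (i + 1) h) := by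
  intro j
  induction j with
  | zero => intro w i h h'; omega
  | succ j ih =>
      intro w i h h'
      by_cases hij : i + 1 ≤ j
      · simp only [mdown]
        rw [dif_pos (by omega : i ≤ j), dif_pos hij]
        exact ih _ i hij (by omega)
      · have hi : i = j := by omega
        subst hi
        simp only [mdown]
        rw [dif_pos (le_refl i), dif_neg (by omega : ¬ i + 1 ≤ i)]
        exact B.mdown_tgt_last i _

theorem mdown_min : ∀ (j : ℕ) (w : B.V (j + 1)) (i : ℕ) (h : i ≤ j),
    B.IsMinEdge (B.mdown j w i h) := by
  intro j
  induction j with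
  | zero =>
      intro w i h
      simp only [mdown]
      exact B.isMinEdge_castE _ _ (B.minEdge_min 0 w)
  | succ j ih =>
      intro w i h
      simp only [mdown]
      by_cases hij : i ≤ j
      · rw [dif_pos hij]; exact ih _ i hij
      · rw [dif_neg hij]; exact B.isMinEdge_castE _ _ (B.minEdge_min _ w)

noncomputable def upPathE (M : ℕ) (up : ∀ j, B.V (M + 1 + j)) (n : ℕ) : B.E n :=
  if h : n ≤ M then B.mdown M (up 0) n h
  else B.castE (by omega : M + 1 + (n - (M + 1)) = n)
    (B.minEdge (M + 1 + (n - (M + 1))) (up (n - (M + 1) + 1)))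

theorem upPathE_isMin (M : ℕ) (up : ∀ j, B.V (M + 1 + j)) (n : ℕ) :
    B.IsMinEdge (B.upPathE M up n) := by
  unfold upPathE
  split
  · exact B.mdown_min M _ n _
  · exact B.isMinEdge_castE _ _ (B.minEdge_min _ _)

theorem upPathE_src_heq (M : ℕ) (up : ∀ j, B.V (M + 1 + j))
    (hup : ∀ j, B.mSrc (M + 1 + j) (up (j + 1)) = up j) (n : ℕ) (hn : M + 1 ≤ n) :
    HEq (B.src (B.upPathE M up n)) (up (n - (M + 1))) := by
  unfold upPathE
  rw [dif_neg (by omega : ¬ n ≤ M), B.castE_src]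
  exact (B.castV_heq _ _).trans (heq_of_eq (hup (n - (M + 1))))

theorem upPathE_tgt_heq (M : ℕ) (up : ∀ j, B.V (M + 1 + j)) (n : ℕ) (hn : M + 1 ≤ n) :
    HEq (B.tgt (B.upPathE M up n)) (up (n - (M + 1) + 1)) := by
  unfold upPathE
  rw [dif_neg (by omega : ¬ n ≤ M), B.castE_tgt]
  exact (B.castV_heq _ _).trans (heq_of_eq (B.minEdge_tgt _ _))

theorem upPathE_compat (M : ℕ) (up : ∀ j, B.V (M + 1 + j))
    (hup : ∀ j, B.mSrc (M + 1 + j) (up (j + 1)) = up j) (n : ℕ) :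
    B.tgt (B.upPathE M up n) = B.src (B.upPathE M up (n + 1)) := by
  rcases lt_trichotomy n M with h | h | h
  · unfold upPathE
    rw [dif_pos (by omega : n ≤ M), dif_pos (by omega : n + 1 ≤ M)]
    exact B.mdown_chain M (up 0) n (by omega) (by omega)
  · subst h
    apply eq_of_heq
    have h1 : B.tgt (B.upPathE n up n) = up 0 := by
      unfold upPathE
      rw [dif_pos le_rfl]
      exact B.mdown_tgt_last n (up 0)
    refine (heq_of_eq h1).trans ?_
    refine HEq.symm ((B.upPathE_src_heq n up hup (n + 1) le_rfl).trans ?_)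
    rw [Nat.sub_self]
  · apply eq_of_heq
    refine (B.upPathE_tgt_heq M up n (by omega)).trans ?_
    refine HEq.symm ((B.upPathE_src_heq M up hup (n + 1) (by omega)).trans ?_)
    have hsub : n + 1 - (M + 1) = n - (M + 1) + 1 := by omega
    rw [hsub]

theorem exists_minPath_through_s18 (N : ℕ) (hN : 1 ≤ N) (up : ∀ j, B.V (N + j))
    (hup : ∀ j, B.mSrc (N + j) (up (j + 1)) = up j) :
    ∃ x : B.PathSpace, B.IsMinPath x ∧ B.pathVert x N = up 0 := by
  obtain ⟨M, rfl⟩ : ∃ M, N = M + 1 := ⟨N - 1, by omega⟩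
  refine ⟨⟨fun n => B.upPathE M up n, fun n => B.upPathE_compat M up hup n⟩,
    fun n => B.upPathE_isMin M up n, ?_⟩
  show B.src (B.upPathE M up (M + 1)) = up 0
  apply eq_of_heq
  refine (B.upPathE_src_heq M up hup (M + 1) le_rfl).trans ?_
  rw [Nat.sub_self]

end BDiagram

/-- In a simple, properly ordered, deterministic Bratteli–Vershik
system the widths `k_n` of the levels satisfy `k_n ≥ k_{n+1}` for all `n ≥ 1`,
and eventually `k_n = 1`. -/
theorem deterministic_widths
    (B : BDiagram) (T : B.PathSpace ≃ B.PathSpace)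
    (hproper : B.ProperlyOrdered) (hsimple : B.Simple) (hT : B.IsVershik T)
    (hdet : B.Deterministic) :
    (∀ n : ℕ, 1 ≤ n → Nat.card (B.V (n + 1)) ≤ Nat.card (B.V n)) ∧
    (∃ N : ℕ, ∀ n : ℕ, N ≤ n → Nat.card (B.V n) = 1) := by
  classical
  have hinj : ∀ n, 1 ≤ n → Function.Injective (B.mSrc n) := B.mSrc_injective hdet
  have part1 : ∀ n, 1 ≤ n → Nat.card (B.V (n + 1)) ≤ Nat.card (B.V n) := by
    intro n hn
    haveI : Fintype (B.V n) := B.fintV n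
    haveI : Fintype (B.V (n + 1)) := B.fintV (n + 1)
    rw [Nat.card_eq_fintype_card, Nat.card_eq_fintype_card]
    exact Fintype.card_le_of_injective _ (hinj n hn)
  refine ⟨part1, ?_⟩
  set f : ℕ → ℕ := fun j => Nat.card (B.V (j + 1)) with hf
  have hanti : Antitone f := antitone_nat_of_succ_le fun j => part1 (j + 1) (by omega)
  have hne : (Set.range f).Nonempty := ⟨f 0, 0, rfl⟩
  set m := sInf (Set.range f) with hm
  obtain ⟨N₀, hN₀⟩ := Nat.sInf_mem hne
  have hmle : ∀ j, m ≤ f j := fun j => Nat.sInf_le ⟨j, rfl⟩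
  have hconst : ∀ j, N₀ ≤ j → f j = m := fun j hj =>
    le_antisymm (le_of_le_of_eq (hanti hj) hN₀) (hmle j)
  have hpos : 1 ≤ m := by
    haveI : Fintype (B.V (N₀ + 1)) := B.fintV _
    haveI : Nonempty (B.V (N₀ + 1)) := B.nonV _
    have h0 : 0 < f N₀ := Nat.card_pos
    omega
  refine ⟨N₀ + 1, fun n hn => ?_⟩
  obtain ⟨j, rfl⟩ : ∃ j, n = j + 1 := ⟨n - 1, by omega⟩
  have hj : N₀ ≤ j := by omega
  show f j = 1
  rw [hconst j hj]
  by_contra hm1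
  have hm2 : 2 ≤ m := by omega
  set L := j + 1 with hL
  have hsur : ∀ i : ℕ, Function.Surjective (B.mSrc (L + i)) := by
    intro i
    haveI : Fintype (B.V (L + i)) := B.fintV _
    haveI : Fintype (B.V (L + i + 1)) := B.fintV _
    have e1 : Nat.card (B.V (L + i + 1)) = f (L + i) := rfl
    have e2 : Nat.card (B.V (L + i)) = f (j + i) :=
      congrArg (fun t => Nat.card (B.V t)) (by omega)
    have hcards : Fintype.card (B.V (L + i + 1)) = Fintype.card (B.V (L + i)) := by
      rw [← Nat.card_eq_fintype_card, ← Nat.card_eq_fintype_card, e1, e2,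
        hconst (L + i) (by omega), hconst (j + i) (by omega)]
    exact ((Fintype.bijective_iff_injective_and_card _).mpr
      ⟨hinj (L + i) (by omega), hcards⟩).surjective
  haveI : Fintype (B.V L) := B.fintV L
  have h2' : 1 < Fintype.card (B.V L) := by
    have : Nat.card (B.V L) = f j := rfl
    rw [← Nat.card_eq_fintype_card, this, hconst j hj]
    omega
  obtain ⟨v, v', hvv⟩ := Fintype.exists_pair_of_one_lt_card h2'
  choose g hg using hsur
  obtain ⟨x, hxmin, hxv⟩ :=
    B.exists_minPath_through_s18 L (by omega) (fun i => Nat.rec v (fun i w => g i w) i)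
      (fun i => hg i _)
  obtain ⟨x', hx'min, hx'v⟩ :=
    B.exists_minPath_through_s18 L (by omega) (fun i => Nat.rec v' (fun i w => g i w) i)
      (fun i => hg i _)
  obtain ⟨xm, -, humin⟩ := hproper.1
  have hxx : x = x' := (humin x hxmin).trans (humin x' hx'min).symm
  exact hvv (hxv.symm.trans ((congrArg (fun z => B.pathVert z L) hxx).trans hx'v))
end
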